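/- arXiv:2505.19961 — 10 statements merged into one kernel-verified Lean document; each statement's English description precedes it below -/
import Mathlib

section
/- For a subadditive valuation v, the value (1/n)·MMS(M, v, n) is residual self-feasible: for every 0 ≤ k < n and any k pairwise disjoint bundles each of value less than (1/n)·MMS(M,v,n), the remaining items admit a partition into n−k parts each of value at least (1/n)·MMS(M,v,n). Consequently RMMS(M, v, n) ≥ (1/n)·MMS(M, v, n) for subadditive v. -/
open Finset

/-- `P` is a partition of the finite set `X` into `n` (possibly empty) parts. -/
def IsPartitionOn {M : Type*} [DecidableEq M] {n : ℕ} (X : Finset M) (P : Fin n → Finset M) : Prop :=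
  (∀ i j, i ≠ j → Disjoint (P i) (P j)) ∧ Finset.univ.biUnion P = X

/-- `t` is residual self-feasible for valuation `v` on the item set `X` with `n` agents:
for every `0 ≤ k < n`, after removing any `k` pairwise disjoint bundles of `X`, each of
`v`-value strictly less than `t`, the remaining items admit an `(n-k)`-partition in which
every part has `v`-value at least `t`. -/
def RSF {M : Type*} [DecidableEq M] {α : Type*} [Preorder α] (v : Finset M → α) (n : ℕ)
    (X : Finset M) (t : α) : Prop :=
  ∀ k, k < n → ∀ B : Fin k → Finset M,
    (∀ i j, i ≠ j → Disjoint (B i) (B j)) → (∀ i, B i ⊆ X) → (∀ i, v (B i) < t) →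
    ∃ P : Fin (n - k) → Finset M,
      (∀ i j, i ≠ j → Disjoint (P i) (P j)) ∧
      Finset.univ.biUnion P = X \ Finset.univ.biUnion B ∧
      ∀ i, t ≤ v (P i)

/- Fix an `n`-partition of `M` whose parts are all worth at least `μ`. By subadditivity the
`k` removed bundles have a union `U` with `v U ≤ k μ / n`, so every part keeps
`v (P j \ U) ≥ v (P j) - v U ≥ (n - k) μ / n ≥ μ / n`. Merging surplus parts to get down to
`n - k` parts and then removing `U` yields the required partition of `M \ U`, by monotonicity. -/

namespace IsPartitionOn

variable {M : Type*} [DecidableEq M] {n m : ℕ} {X : Finset M} {P : Fin n → Finset M}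

lemma sdiff (hP : IsPartitionOn X P) (Y : Finset M) :
    IsPartitionOn (X \ Y) (fun i => P i \ Y) := by
  refine ⟨fun i j hij => (hP.1 i j hij).mono sdiff_subset sdiff_subset, ?_⟩
  rw [← sup_eq_biUnion, Finset.sup_sdiff_right, sup_eq_biUnion, hP.2]

lemma merge (hP : IsPartitionOn X P) (f : Fin n → Fin m) :
    IsPartitionOn X (fun i => (univ.filter (f · = i)).biUnion P) := by
  refine ⟨fun i i' hii' => ?_, ?_⟩
  · rw [disjoint_biUnion_left]
    intro j hj
    rw [disjoint_biUnion_right]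
    intro j' hj'
    simp only [mem_filter, mem_univ, true_and] at hj hj'
    exact hP.1 j j' fun h => hii' (hj ▸ hj' ▸ congrArg f h)
  · rw [← hP.2]
    ext x
    simp only [mem_biUnion, mem_filter, mem_univ, true_and]
    exact ⟨fun ⟨_, j, _, hx⟩ => ⟨j, hx⟩, fun ⟨j, hx⟩ => ⟨f j, j, rfl, hx⟩⟩

lemma exists_coarsening (hP : IsPartitionOn X P) (hm : 0 < m) (hmn : m ≤ n) :
    ∃ Q : Fin m → Finset M, IsPartitionOn X Q ∧ ∀ i, ∃ j, P j ⊆ Q i := by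
  have : Nonempty (Fin m) := ⟨⟨0, hm⟩⟩
  have hf := Function.invFun_surjective (Fin.castLE_injective hmn)
  refine ⟨_, hP.merge (Function.invFun (Fin.castLE hmn)), fun i => ?_⟩
  obtain ⟨j, rfl⟩ := hf i
  exact ⟨j, subset_biUnion_of_mem P (by simp)⟩

end IsPartitionOn

lemma apply_le_apply_sdiff_add {M α : Type*} [DecidableEq M] [Add α] [Preorder α]
    {v : Finset M → α} (hmono : Monotone v) (hsub : ∀ S T, v (S ∪ T) ≤ v S + v T)
    (S T : Finset M) : v S ≤ v (S \ T) + v T :=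
  (hmono le_sdiff_sup).trans (hsub _ _)

theorem rsf_of_isPartitionOn {M α : Type*} [DecidableEq M] [AddCommMonoid α] [PartialOrder α]
    [IsOrderedCancelAddMonoid α] [CanonicallyOrderedAdd α] {v : Finset M → α}
    (hmono : Monotone v) (hzero : v ∅ = 0)
    (hsub : ∀ S T, v (S ∪ T) ≤ v S + v T) {n : ℕ} {X : Finset M} {P : Fin n → Finset M}
    (hP : IsPartitionOn X P) {t : α} (ht : ∀ j, n • t ≤ v (P j)) : RSF v n X t := by
  intro k hk B _ _ hBt
  have hU : v (univ.biUnion B) ≤ k • t := calc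
    v (univ.biUnion B) ≤ ∑ i, v (B i) := by
      rw [← sup_eq_biUnion]; exact apply_sup_le_sum hzero (hsub _ _) univ
    _ ≤ ∑ _i : Fin k, t := sum_le_sum fun i _ => (hBt i).le
    _ = k • t := by simp
  set U := univ.biUnion B
  have hrest : ∀ j, t ≤ v (P j \ U) := fun j => by
    refine le_of_add_le_add_right (a := k • t) ?_
    calc t + k • t = (k + 1) • t := by rw [succ_nsmul']
      _ ≤ n • t := nsmul_le_nsmul_left zero_le hk
      _ ≤ v (P j) := ht j
      _ ≤ v (P j \ U) + v U := apply_le_apply_sdiff_add hmono hsub _ _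
      _ ≤ v (P j \ U) + k • t := add_le_add_right hU _
  obtain ⟨Q, hQ, hPQ⟩ := hP.exists_coarsening (m := n - k) (by omega) (by omega)
  refine ⟨fun i => Q i \ U, (hQ.sdiff U).1, (hQ.sdiff U).2, fun i => ?_⟩
  obtain ⟨j, hj⟩ := hPQ i
  exact (hrest j).trans (hmono (sdiff_subset_sdiff hj le_rfl))

theorem rmms_ge_mms_div_n_subadditive_general {M : Type*} [Fintype M] [DecidableEq M]
    (n : ℕ)
    (v : Finset M → NNReal)
    (hmono : ∀ S T : Finset M, S ⊆ T → v S ≤ v T) (hzero : v ∅ = 0)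
    (hsub : ∀ S T : Finset M, v (S ∪ T) ≤ v S + v T)
    (μ : NNReal)
    (hμ : IsGreatest {t : NNReal | ∃ P : Fin n → Finset M,
        IsPartitionOn Finset.univ P ∧ ∀ j, t ≤ v (P j)} μ) :
    RSF v n (Finset.univ : Finset M) (μ / n) ∧
      ∀ r : NNReal, IsGreatest {t : NNReal | RSF v n (Finset.univ : Finset M) t} r →
        μ / n ≤ r := by
  obtain ⟨⟨P, hP, hPμ⟩, -⟩ := hμ
  have hRSF : RSF v n univ (μ / n) := by
    refine rsf_of_isPartitionOn (fun S T h => hmono S T h) hzero hsub hP fun j => ?_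
    rw [nsmul_eq_mul, mul_div_left_comm]
    exact (mul_le_of_le_one_right' (div_self_le_one _)).trans (hPμ j)
  exact ⟨hRSF, fun r hr => hr.2 hRSF⟩

/-- For a subadditive valuation, `(1/n)·MMS` is residual self-feasible; consequently
`RMMS ≥ (1/n)·MMS`. -/
theorem rmms_ge_mms_div_n_subadditive {M : Type*} [Fintype M] [DecidableEq M]
    (n : ℕ) (hn : 1 ≤ n)
    (v : Finset M → NNReal)
    (hmono : ∀ S T : Finset M, S ⊆ T → v S ≤ v T) (hzero : v ∅ = 0)
    (hsub : ∀ S T : Finset M, v (S ∪ T) ≤ v S + v T)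
    (μ : NNReal)
    (hμ : IsGreatest {t : NNReal | ∃ P : Fin n → Finset M,
        IsPartitionOn Finset.univ P ∧ ∀ j, t ≤ v (P j)} μ) :
    RSF v n (Finset.univ : Finset M) (μ / n) ∧
      ∀ r : NNReal, IsGreatest {t : NNReal | RSF v n (Finset.univ : Finset M) t} r →
        μ / n ≤ r :=
  rmms_ge_mms_div_n_subadditive_general n v hmono hzero hsub μ hμ
end

section
/- For agents with monotone subadditive valuations, a (1/n)-MMS allocation always exists: there is a partition A_1,...,A_n of the item set M (agent i receives A_i) such that v_i(A_i) ≥ (1/n)·MMS(M, v_i, n) for every agent i. -/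
open Finset

/-!
Greedy algorithm with thresholds `t i = μ i / n`: as long as some agent is waiting, take a
set of unallocated items of minimum size that some waiting agent values at least at its
threshold, and give it to that agent. Every allocated bundle is then inclusion-minimal for
every agent `i` still waiting, so `i` values each of its intersections with the `k < n`
allocated bundles below `t i`. Since the `n` parts of an MMS partition of `i` are disjoint, one
of them contains none of the nonempty allocated bundles, and by subadditivity its unallocated
items are worth at least `n • t i - k • t i ≥ t i` to `i`; so the algorithm never gets stuck.
The items left over at the end go to an arbitrary agent.
-/

open Function
open scoped NNReal

structure IsSubadditiveValuation {M : Type*} [DecidableEq M] (w : Finset M → ℝ≥0) : Prop where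
  monotone : Monotone w
  map_empty : w ∅ = 0
  map_union_le : ∀ S T, w (S ∪ T) ≤ w S + w T

theorem exists_forall_not_subset_of_card_lt {M ι κ : Type*} [Fintype ι] [Fintype κ]
    {P : κ → Finset M} (hP : Pairwise (Disjoint on P)) {A : ι → Finset M}
    (hcard : #{j | (A j).Nonempty} < Fintype.card κ) :
    ∃ s, ∀ j, (A j).Nonempty → ¬A j ⊆ P s := by
  classical
  have hunique : ∀ j, (A j).Nonempty → #{s | A j ⊆ P s} ≤ 1 := fun j ⟨x, hx⟩ =>
    card_le_one.2 fun s hs s' hs' => by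
      by_contra hne
      exact disjoint_left.1 (hP hne) ((mem_filter.1 hs).2 hx) ((mem_filter.1 hs').2 hx)
  have hbad : #(({j | (A j).Nonempty} : Finset ι).biUnion fun j => {s | A j ⊆ P s}) < #univ :=
    calc _ ≤ ∑ j ∈ ({j | (A j).Nonempty} : Finset ι), #{s | A j ⊆ P s} := card_biUnion_le
      _ ≤ ∑ j ∈ ({j | (A j).Nonempty} : Finset ι), 1 :=
          sum_le_sum fun j hj => hunique j (mem_filter.1 hj).2
      _ < #univ := by simpa using hcard
  obtain ⟨s, -, hs⟩ := exists_mem_notMem_of_card_lt_card hbad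
  exact ⟨s, fun j hj hjs => hs (mem_biUnion.2 ⟨j, by simpa using hj, by simpa using hjs⟩)⟩

namespace IsSubadditiveValuation

variable {M ι κ : Type*} [DecidableEq M] {w : Finset M → ℝ≥0}

theorem map_biUnion_le (hw : IsSubadditiveValuation w) (s : Finset ι) (f : ι → Finset M) :
    w (s.biUnion f) ≤ ∑ j ∈ s, w (f j) := by
  classical
  induction s using Finset.induction_on with
  | empty => simp [hw.map_empty]
  | insert a s ha ih =>
    rw [biUnion_insert, sum_insert ha]
    exact (hw.map_union_le _ _).trans (by gcongr)

theorem exists_le_map_sdiff_biUnion [Fintype ι] [Fintype κ] (hw : IsSubadditiveValuation w)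
    {P : κ → Finset M} (hP : Pairwise (Disjoint on P)) {τ : ℝ≥0}
    (hPτ : ∀ s, Fintype.card κ * τ ≤ w (P s)) {A : ι → Finset M} (hA : ∀ j, ∀ S ⊂ A j, w S ≤ τ)
    (hcard : #{j | (A j).Nonempty} < Fintype.card κ) :
    ∃ s, τ ≤ w (P s \ univ.biUnion A) := by
  classical
  obtain ⟨s, hs⟩ := exists_forall_not_subset_of_card_lt hP hcard
  set K : Finset ι := {j | (A j).Nonempty}
  have hcover : P s ⊆ (P s \ univ.biUnion A) ∪ K.biUnion fun j => P s ∩ A j := by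
    intro x hx
    by_cases hxA : x ∈ univ.biUnion A
    · obtain ⟨j, -, hxj⟩ := mem_biUnion.1 hxA
      exact mem_union_right _
        (mem_biUnion.2 ⟨j, by simpa [K] using ⟨x, hxj⟩, mem_inter.2 ⟨hx, hxj⟩⟩)
    · exact mem_union_left _ (mem_sdiff.2 ⟨hx, hxA⟩)
  have hpiece : ∀ j ∈ K, w (P s ∩ A j) ≤ τ := fun j hj =>
    hA j _ (inter_subset_right.ssubset_of_not_subset fun h =>
      hs j (mem_filter.1 hj).2 (h.trans inter_subset_left))
  refine ⟨s, le_of_add_le_add_right (a := #K * τ) ?_⟩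
  calc τ + #K * τ = ((#K + 1 : ℕ) : ℝ≥0) * τ := by push_cast; ring
    _ ≤ Fintype.card κ * τ := by gcongr; exact hcard
    _ ≤ w (P s) := hPτ s
    _ ≤ w (P s \ univ.biUnion A) + w (K.biUnion fun j => P s ∩ A j) :=
        (hw.monotone hcover).trans (hw.map_union_le _ _)
    _ ≤ w (P s \ univ.biUnion A) + ∑ j ∈ K, w (P s ∩ A j) := by
        gcongr; exact hw.map_biUnion_le _ _
    _ ≤ w (P s \ univ.biUnion A) + #K * τ := by
        gcongr; simpa using sum_le_sum hpiece

end IsSubadditiveValuation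

theorem Pairwise.disjoint_update {α ι : Type*} [PartialOrder α] [OrderBot α] [DecidableEq ι]
    {A : ι → α} (hA : Pairwise (Disjoint on A)) {a : ι} {B : α} (hB : ∀ j ≠ a, Disjoint B (A j)) :
    Pairwise (Disjoint on update A a B) := by
  intro j k hjk
  simp only [onFun, update_apply]
  split_ifs with hj hk hk
  · exact absurd (hj.trans hk.symm) hjk
  · exact hB k hk
  · exact (hB j hj).symm
  · exact hA hjk

section Greedy

variable {M ι : Type*} {v : ι → Finset M → ℝ≥0} {t : ι → ℝ≥0}

/-- A state of the greedy algorithm in which the agents of `T` are still waiting. -/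
structure IsGreedyState (v : ι → Finset M → ℝ≥0) (t : ι → ℝ≥0) (T : Finset ι)
    (A : ι → Finset M) : Prop where
  pairwise_disjoint : Pairwise (Disjoint on A)
  eq_empty : ∀ j ∈ T, A j = ∅
  le_apply : ∀ j ∉ T, t j ≤ v j (A j)
  apply_lt : ∀ i ∈ T, ∀ j, ∀ S ⊂ A j, v i S < t i

theorem isGreedyState_univ [Fintype ι] : IsGreedyState v t univ fun _ => ∅ where
  pairwise_disjoint _ _ _ := disjoint_empty_left _
  eq_empty _ _ := rfl
  le_apply _ hj := absurd (mem_univ _) hj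
  apply_lt _ _ _ S hS := absurd hS (not_ssubset_empty S)

theorem exists_minimal_subset_le_apply {T : Finset ι} {R : Finset M}
    (h : ∃ i ∈ T, ∃ S ⊆ R, t i ≤ v i S) :
    ∃ a ∈ T, ∃ B ⊆ R, t a ≤ v a B ∧ ∀ i ∈ T, ∀ S ⊂ B, v i S < t i := by
  classical
  set C : Finset (Finset M) := {S ∈ R.powerset | ∃ i ∈ T, t i ≤ v i S}
  have hC : C.Nonempty := by
    obtain ⟨i, hi, S, hSR, hS⟩ := h
    exact ⟨S, mem_filter.2 ⟨mem_powerset.2 hSR, i, hi, hS⟩⟩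
  obtain ⟨B, hBC, hBmin⟩ := exists_min_image C card hC
  obtain ⟨hBR, a, ha, haB⟩ := mem_filter.1 hBC
  refine ⟨a, ha, B, mem_powerset.1 hBR, haB, fun i hi S hSB => ?_⟩
  by_contra! hiS
  have hSC : S ∈ C :=
    mem_filter.2 ⟨mem_powerset.2 (hSB.subset.trans (mem_powerset.1 hBR)), i, hi, hiS⟩
  exact (hBmin S hSC).not_gt (card_lt_card hSB)

namespace IsGreedyState

variable {T : Finset ι} {A : ι → Finset M}

theorem update [DecidableEq M] [Fintype ι] [DecidableEq ι] (hA : IsGreedyState v t T A) {a : ι}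
    (ha : a ∈ T) {B : Finset M} (hBA : Disjoint B (univ.biUnion A)) (haB : t a ≤ v a B)
    (hBmin : ∀ i ∈ T, ∀ S ⊂ B, v i S < t i) :
    IsGreedyState v t (T.erase a) (update A a B) where
  pairwise_disjoint := hA.pairwise_disjoint.disjoint_update fun j _ =>
    hBA.mono_right (subset_biUnion_of_mem A (mem_univ j))
  eq_empty j hj := by
    rw [update_of_ne (ne_of_mem_erase hj)]
    exact hA.eq_empty j (mem_of_mem_erase hj)
  le_apply j hj := by
    rcases eq_or_ne j a with rfl | hja
    · rwa [update_self]
    · rw [update_of_ne hja]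
      exact hA.le_apply j fun h => hj (mem_erase.2 ⟨hja, h⟩)
  apply_lt i hi j S hS := by
    rcases eq_or_ne j a with rfl | hja
    · rw [update_self] at hS
      exact hBmin i (mem_of_mem_erase hi) S hS
    · rw [update_of_ne hja] at hS
      exact hA.apply_lt i (mem_of_mem_erase hi) j S hS

variable [DecidableEq M] [Fintype M] [Fintype ι] [DecidableEq ι] {P : ι → ι → Finset M}

theorem exists_erase (hv : ∀ i, IsSubadditiveValuation (v i))
    (hP : ∀ i, Pairwise (Disjoint on P i)) (hPt : ∀ i s, Fintype.card ι * t i ≤ v i (P i s))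
    (hA : IsGreedyState v t T A) (hT : T.Nonempty) :
    ∃ a ∈ T, ∃ A', IsGreedyState v t (T.erase a) A' := by
  have hcard : #{j | (A j).Nonempty} < Fintype.card ι := by
    refine (card_le_card fun j hj => mem_compl.2 fun hjT => ?_).trans_lt
      ((card_compl_lt_iff_nonempty T).2 hT)
    simp [hA.eq_empty j hjT] at hj
  obtain ⟨i, hi⟩ := hT
  obtain ⟨s, hs⟩ := (hv i).exists_le_map_sdiff_biUnion (hP i) (hPt i)
    (fun j S hS => (hA.apply_lt i hi j S hS).le) hcard
  obtain ⟨a, ha, B, hBR, haB, hBmin⟩ :=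
    exists_minimal_subset_le_apply ⟨i, hi, _, sdiff_subset_sdiff (subset_univ _) subset_rfl, hs⟩
  exact ⟨a, ha, _, hA.update ha (sdiff_disjoint.mono_left hBR) haB hBmin⟩

theorem exists_allocation (hv : ∀ i, IsSubadditiveValuation (v i))
    (hP : ∀ i, Pairwise (Disjoint on P i)) (hPt : ∀ i s, Fintype.card ι * t i ≤ v i (P i s))
    (hA : IsGreedyState v t T A) :
    ∃ A' : ι → Finset M, Pairwise (Disjoint on A') ∧ ∀ i, t i ≤ v i (A' i) := by
  induction T using Finset.strongInduction generalizing A with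
  | H T ih =>
    obtain rfl | hT := T.eq_empty_or_nonempty
    · exact ⟨A, hA.pairwise_disjoint, fun i => hA.le_apply i (notMem_empty i)⟩
    obtain ⟨a, ha, A', hA'⟩ := hA.exists_erase hv hP hPt hT
    exact ih _ (erase_ssubset ha) hA'

end IsGreedyState

end Greedy

theorem exists_isPartitionOn_univ_superset {M : Type*} [Fintype M] [DecidableEq M] {n : ℕ}
    {A : Fin n → Finset M} (hA : Pairwise (Disjoint on A)) (i₀ : Fin n) :
    ∃ A' : Fin n → Finset M, IsPartitionOn univ A' ∧ ∀ i, A i ⊆ A' i := by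
  set L := univ \ univ.biUnion A
  have hL : ∀ j, Disjoint L (A j) := fun j =>
    sdiff_disjoint.mono_right (subset_biUnion_of_mem A (mem_univ j))
  have hsuper : ∀ i, A i ⊆ update A i₀ (A i₀ ∪ L) i := fun i => by
    rcases eq_or_ne i i₀ with rfl | hi
    · simp
    · simp [hi]
  refine ⟨update A i₀ (A i₀ ∪ L), ⟨?_, ?_⟩, hsuper⟩
  · exact hA.disjoint_update fun j hj => disjoint_union_left.2 ⟨hA hj.symm, hL j⟩
  · refine eq_univ_of_forall fun x => mem_biUnion.2 ?_
    by_cases hx : x ∈ univ.biUnion A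
    · obtain ⟨j, -, hxj⟩ := mem_biUnion.1 hx
      exact ⟨j, mem_univ j, hsuper j hxj⟩
    · exact ⟨i₀, mem_univ i₀, by simp [L, hx]⟩

/-- For agents with monotone subadditive valuations, a `(1/n)`-MMS allocation always
exists. -/
theorem exists_one_over_n_mms_allocation {M : Type*} [Fintype M] [DecidableEq M]
    (n : ℕ) (hn : 1 ≤ n)
    (v : Fin n → Finset M → NNReal)
    (hmono : ∀ i, ∀ S T : Finset M, S ⊆ T → v i S ≤ v i T)
    (hzero : ∀ i, v i ∅ = 0)
    (hsub : ∀ i, ∀ S T : Finset M, v i (S ∪ T) ≤ v i S + v i T)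
    (μ : Fin n → NNReal)
    (hμ : ∀ i, IsGreatest {t : NNReal | ∃ P : Fin n → Finset M,
        IsPartitionOn Finset.univ P ∧ ∀ j, t ≤ v i (P j)} (μ i)) :
    ∃ A : Fin n → Finset M, IsPartitionOn Finset.univ A ∧
      ∀ i, μ i / n ≤ v i (A i) := by
  have hv i : IsSubadditiveValuation (v i) := ⟨fun S T => hmono i S T, hzero i, hsub i⟩
  choose P hP hPμ using fun i => (hμ i).1
  have hPt i s : Fintype.card (Fin n) * (μ i / n) ≤ v i (P i s) := by
    rw [Fintype.card_fin, mul_div_cancel₀ _ (Nat.cast_ne_zero.2 (by omega))]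
    exact hPμ i s
  obtain ⟨A, hA, hAv⟩ :=
    isGreedyState_univ.exists_allocation hv (fun i => (hP i).1) hPt
  obtain ⟨A', hA', hAA'⟩ := exists_isPartitionOn_univ_superset hA ⟨0, hn⟩
  exact ⟨A', hA', fun i => (hAv i).trans (hmono i _ _ (hAA' i))⟩
end

section
/- If a share value function s assigns to each valuation v a residual self-feasible value s(v), then an s-allocation exists: there is a partition A_1,...,A_n of M with v_i(A_i) ≥ s(v_i) for every agent i. (Feasibility of residual self-feasible shares, in particular of RMMS.) -/
open Finset

lemma biUnion_fin_cons {M : Type*} [DecidableEq M] {k : ℕ} (C : Finset M)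
    (B : Fin k → Finset M) :
    Finset.univ.biUnion (Fin.cons C B : Fin (k+1) → Finset M)
      = C ∪ Finset.univ.biUnion B := by
  ext x
  simp only [mem_biUnion, mem_univ, true_and, mem_union]
  constructor
  · rintro ⟨i, hi⟩
    induction i using Fin.cases with
    | zero => left; simpa using hi
    | succ j => right; exact ⟨j, by simpa using hi⟩
  · rintro (h | ⟨j, hj⟩)
    · exact ⟨0, by simpa using h⟩
    · exact ⟨j.succ, by simpa using hj⟩

/-- Removing one small bundle from the item set decreases the number of agents by one
while preserving residual self-feasibility. -/
lemma RSF.removeOne {M : Type*} [DecidableEq M] {v : Finset M → NNReal} {m : ℕ}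
    {R : Finset M} {t : NNReal} (h : RSF v m R t) {C : Finset M}
    (hCR : C ⊆ R) (hCt : v C < t) : RSF v (m - 1) (R \ C) t := by
  intro k hk B hBdisj hBsub hBsmall
  have hk' : k + 1 < m := by omega
  have hBC : ∀ i, Disjoint C (B i) := by
    intro i
    refine Finset.disjoint_left.mpr fun x hxC hxB => ?_
    exact (Finset.mem_sdiff.mp (hBsub i hxB)).2 hxC
  obtain ⟨P, hP1, hP2, hP3⟩ := h (k+1) hk' (Fin.cons C B)
    (by
      intro i j hij
      induction i using Fin.cases with
      | zero =>
        induction j using Fin.cases with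
        | zero => exact absurd rfl hij
        | succ j => simpa using hBC j
      | succ i =>
        induction j using Fin.cases with
        | zero => simpa using (hBC i).symm
        | succ j =>
          simp only [Fin.cons_succ]
          exact hBdisj i j (fun e => hij (by rw [e])))
    (by
      intro i
      induction i using Fin.cases with
      | zero => simpa using hCR
      | succ i => simpa using (hBsub i).trans Finset.sdiff_subset)
    (by
      intro i
      induction i using Fin.cases with
      | zero => simpa using hCt
      | succ i => simpa using hBsmall i)
  have hcard : m - 1 - k = m - (k + 1) := by omega
  rw [hcard]
  refine ⟨P, hP1, ?_, hP3⟩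
  rw [hP2, biUnion_fin_cons]
  ext x
  simp only [mem_sdiff, mem_union]
  tauto


/-- Removing a finite family of pairwise disjoint small bundles. -/
lemma RSF.removeFamily {M ι : Type*} [DecidableEq M] [DecidableEq ι]
    {v : Finset M → NNReal} {m : ℕ} {R : Finset M} {t : NNReal}
    (h : RSF v m R t) (T : Finset ι) (F : ι → Finset M)
    (hsub : ∀ i ∈ T, F i ⊆ R)
    (hdisj : ∀ i ∈ T, ∀ j ∈ T, i ≠ j → Disjoint (F i) (F j))
    (hsmall : ∀ i ∈ T, v (F i) < t) :
    RSF v (m - T.card) (R \ T.biUnion F) t := by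
  revert hsub hdisj hsmall
  induction T using Finset.induction_on with
  | empty => intro _ _ _; simpa using h
  | @insert a T ha ih =>
    intro hsub hdisj hsmall
    have h1 := ih (fun i hi => hsub i (mem_insert_of_mem hi))
      (fun i hi j hj hij => hdisj i (mem_insert_of_mem hi) j (mem_insert_of_mem hj) hij)
      (fun i hi => hsmall i (mem_insert_of_mem hi))
    have hCsub : F a ⊆ R \ T.biUnion F := by
      intro x hx
      refine mem_sdiff.mpr ⟨hsub a (mem_insert_self a T) hx, ?_⟩
      intro hmem
      obtain ⟨i, hiT, hxi⟩ := mem_biUnion.mp hmem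
      exact (Finset.disjoint_left.mp
        (hdisj a (mem_insert_self a T) i (mem_insert_of_mem hiT)
          (by rintro rfl; exact ha hiT)) hx) hxi
    have h2 := h1.removeOne hCsub (hsmall a (mem_insert_self a T))
    have e1 : m - T.card - 1 = m - (insert a T).card := by
      rw [card_insert_of_notMem ha]; omega
    have e2 : (R \ T.biUnion F) \ F a = R \ (insert a T).biUnion F := by
      rw [biUnion_insert]; ext x; simp only [mem_sdiff, mem_union]; tauto
    rw [e1, e2] at h2
    exact h2

lemma main_alloc {M ι : Type*} [DecidableEq M] [DecidableEq ι]
    (v : ι → Finset M → NNReal) (s : ι → NNReal) :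
    ∀ m : ℕ, 1 ≤ m → ∀ S : Finset ι, S.card = m → ∀ R : Finset M,
      (∀ i ∈ S, RSF (v i) m R (s i)) →
      ∃ A : ι → Finset M,
        (∀ i ∈ S, ∀ j ∈ S, i ≠ j → Disjoint (A i) (A j)) ∧
        S.biUnion A = R ∧ ∀ i ∈ S, s i ≤ v i (A i) := by
  intro m
  induction m using Nat.strong_induction_on with
  | _ m IH =>
  intro hm S hS R hRSF
  obtain ⟨i0, hi0⟩ : S.Nonempty := card_pos.mp (by omega)
  -- pivot partition
  obtain ⟨P, hPdisj, hPun, hPval⟩ :=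
    hRSF i0 hi0 0 (by omega) (fun i => i.elim0) (fun i => i.elim0)
      (fun i => i.elim0) (fun i => i.elim0)
  have hPun' : Finset.univ.biUnion P = R := by
    simpa using hPun
  have hPsub : ∀ j, P j ⊆ R := fun j =>
    hPun' ▸ Finset.subset_biUnion_of_mem P (mem_univ j)
  set likes : ι → Finset (Fin (m - 0)) :=
    fun i => Finset.univ.filter (fun j => s i ≤ v i (P j)) with hlikes
  have hlikes_i0 : ∀ j, j ∈ likes i0 := fun j =>
    mem_filter.mpr ⟨mem_univ j, hPval j⟩
  by_cases hHall : ∀ A ∈ S.powerset, A.card ≤ (A.biUnion likes).card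
  · -- Hall's condition holds: perfect matching, allocate all parts at once
    have hall : ∀ (A : Finset ↥S), A.card ≤ (A.biUnion fun i => likes ↑i).card := by
      intro A
      have hsub : A.map (Function.Embedding.subtype _) ∈ S.powerset := by
        rw [mem_powerset]
        intro x hx
        simp only [mem_map, Function.Embedding.coe_subtype] at hx
        obtain ⟨⟨y, hy⟩, _, rfl⟩ := hx
        exact hy
      have h1 := hHall _ hsub
      rw [Finset.card_map] at h1
      refine h1.trans (le_of_eq ?_)
      congr 1
      ext j
      simp [mem_biUnion]
    obtain ⟨f, hfinj, hfmem⟩ :=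
      (Finset.all_card_le_biUnion_card_iff_exists_injective
        (fun i : ↥S => likes ↑i)).mp hall
    have hfsurj : Function.Surjective f := by
      have hcards : Fintype.card ↥S = Fintype.card (Fin (m - 0)) := by
        simp [Fintype.card_coe, hS]
      exact (Fintype.bijective_iff_injective_and_card f).mpr ⟨hfinj, hcards⟩ |>.2
    refine ⟨fun i => if h : i ∈ S then P (f ⟨i, h⟩) else ∅, ?_, ?_, ?_⟩
    · intro i hi j hj hij
      simp only [dif_pos hi, dif_pos hj]
      exact hPdisj _ _ (fun e => hij (by simpa using congrArg Subtype.val (hfinj e)))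
    · apply subset_antisymm
      · intro x hx
        obtain ⟨i, hiS, hxi⟩ := mem_biUnion.mp hx
        simp only [dif_pos hiS] at hxi
        exact hPsub _ hxi
      · intro x hx
        rw [← hPun'] at hx
        obtain ⟨j, _, hxj⟩ := mem_biUnion.mp hx
        obtain ⟨i, rfl⟩ := hfsurj j
        refine mem_biUnion.mpr ⟨↑i, i.2, ?_⟩
        simp only [dif_pos i.2]
        simpa using hxj
    · intro i hi
      simp only [dif_pos hi]
      exact (mem_filter.mp (hfmem ⟨i, hi⟩)).2
  · -- Hall fails: take a maximum-deficiency violator A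
    push_neg at hHall
    obtain ⟨A0, hA0S, hA0⟩ := hHall
    obtain ⟨A, hApow, hAmax⟩ := S.powerset.exists_max_image
      (fun A => A.card - (A.biUnion likes).card) ⟨A0, hA0S⟩
    have hAS : A ⊆ S := mem_powerset.mp hApow
    have hdef : 1 ≤ A.card - (A.biUnion likes).card := by
      have := hAmax A0 hA0S
      omega
    have hba : (A.biUnion likes).card < A.card := by omega
    have ham : A.card < m := by
      rcases lt_or_ge A.card m with h | h
      · exact h
      · exfalso
        have hAeq : A = S := Finset.eq_of_subset_of_card_le hAS (by omega)
        have : (Finset.univ : Finset (Fin (m - 0))) ⊆ A.biUnion likes := by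
          intro j _
          exact mem_biUnion.mpr ⟨i0, hAeq ▸ hi0, hlikes_i0 j⟩
        have h2 := Finset.card_le_card this
        simp only [Finset.card_univ, Fintype.card_fin] at h2
        have h3 : A.card ≤ m := hS ▸ Finset.card_le_card hAS
        omega
    have ha1 : 1 ≤ A.card := by omega
    -- Hall for the rest of the agents into parts outside N(A)
    have hall2 : ∀ (B : Finset ↥(S \ A)),
        B.card ≤ (B.biUnion fun i => likes ↑i \ A.biUnion likes).card := by
      intro B
      set B' := B.map (Function.Embedding.subtype _) with hB'
      have hB'sub : B' ⊆ S \ A := by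
        intro x hx
        simp only [hB', mem_map, Function.Embedding.coe_subtype] at hx
        obtain ⟨⟨y, hy⟩, _, rfl⟩ := hx
        exact hy
      have hB'card : B'.card = B.card := Finset.card_map _
      have hdisjAB : Disjoint A B' :=
        (Finset.disjoint_sdiff).mono_right hB'sub |>.symm.symm
      have hABpow : A ∪ B' ∈ S.powerset := by
        rw [mem_powerset]
        exact Finset.union_subset hAS (hB'sub.trans (Finset.sdiff_subset))
      have hcardU : (A ∪ B').card = A.card + B.card := by
        rw [Finset.card_union_of_disjoint hdisjAB, hB'card]
      have hNsub : (A ∪ B').biUnion likes ⊆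
          A.biUnion likes ∪ (B.biUnion fun i => likes ↑i \ A.biUnion likes) := by
        intro j hj
        obtain ⟨i, hiU, hji⟩ := mem_biUnion.mp hj
        by_cases hjA : j ∈ A.biUnion likes
        · exact mem_union_left _ hjA
        · rcases mem_union.mp hiU with hiA | hiB
          · exact absurd (mem_biUnion.mpr ⟨i, hiA, hji⟩) hjA
          · refine mem_union_right _ (mem_biUnion.mpr ?_)
            simp only [hB', mem_map, Function.Embedding.coe_subtype] at hiB
            obtain ⟨y, hyB, rfl⟩ := hiB
            exact ⟨y, hyB, mem_sdiff.mpr ⟨hji, hjA⟩⟩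
      have hNcard : ((A ∪ B').biUnion likes).card ≤
          (A.biUnion likes).card +
            ((B.biUnion fun i => likes ↑i \ A.biUnion likes)).card :=
        (Finset.card_le_card hNsub).trans (Finset.card_union_le _ _)
      have hmax := hAmax (A ∪ B') hABpow
      omega
    obtain ⟨g, hginj, hgmem⟩ :=
      (Finset.all_card_le_biUnion_card_iff_exists_injective
        (fun i : ↥(S \ A) => likes ↑i \ A.biUnion likes)).mp hall2
    -- the satisfied agents get their matched parts
    set F : ι → Finset M := fun i => if h : i ∈ S \ A then P (g ⟨i, h⟩) else ∅ with hF
    have hFsub : ∀ i ∈ S \ A, F i ⊆ R := by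
      intro i hi
      rw [hF]; simp only [dif_pos hi]
      exact hPsub _
    have hFdisj : ∀ i ∈ S \ A, ∀ j ∈ S \ A, i ≠ j → Disjoint (F i) (F j) := by
      intro i hi j hj hij
      simp only [hF, dif_pos hi, dif_pos hj]
      exact hPdisj _ _ (fun e => hij (by simpa using congrArg Subtype.val (hginj e)))
    have hFval : ∀ i ∈ S \ A, s i ≤ v i (F i) := by
      intro i hi
      simp only [hF, dif_pos hi]
      exact (mem_filter.mp (mem_sdiff.mp (hgmem ⟨i, hi⟩)).1).2
    have hFsmall : ∀ i₁ ∈ A, ∀ i ∈ S \ A, v i₁ (F i) < s i₁ := by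
      intro i₁ hi₁ i hi
      simp only [hF, dif_pos hi]
      by_contra hcon
      push_neg at hcon
      have : g ⟨i, hi⟩ ∈ A.biUnion likes :=
        mem_biUnion.mpr ⟨i₁, hi₁, mem_filter.mpr ⟨mem_univ _, hcon⟩⟩
      exact (mem_sdiff.mp (hgmem ⟨i, hi⟩)).2 this
    set X := (S \ A).biUnion F with hX
    have hXR : X ⊆ R := by
      intro x hx
      obtain ⟨i, hi, hxi⟩ := mem_biUnion.mp hx
      exact hFsub i hi hxi
    have hcardSA : (S \ A).card = m - A.card := by
      rw [card_sdiff_of_subset hAS, hS]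
    -- each remaining agent keeps RSF on the residual
    have hRSF' : ∀ i₁ ∈ A, RSF (v i₁) A.card (R \ X) (s i₁) := by
      intro i₁ hi₁
      have h1 := (hRSF i₁ (hAS hi₁)).removeFamily (S \ A) F
        hFsub hFdisj (hFsmall i₁ hi₁)
      rw [hcardSA] at h1
      have : m - (m - A.card) = A.card := by omega
      rwa [this] at h1
    obtain ⟨Q, hQdisj, hQun, hQval⟩ := IH A.card ham ha1 A rfl (R \ X) hRSF'
    have hQsub : ∀ i ∈ A, Q i ⊆ R \ X := fun i hi =>
      hQun ▸ Finset.subset_biUnion_of_mem Q hi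
    refine ⟨fun i => if i ∈ A then Q i else F i, ?_, ?_, ?_⟩
    · intro i hi j hj hij
      by_cases hiA : i ∈ A <;> by_cases hjA : j ∈ A
      · simpa [hiA, hjA] using hQdisj i hiA j hjA hij
      · simp only [if_pos hiA, if_neg hjA]
        have hjSA : j ∈ S \ A := mem_sdiff.mpr ⟨hj, hjA⟩
        exact (Finset.sdiff_disjoint.mono (hQsub i hiA)
          ((Finset.subset_biUnion_of_mem F hjSA).trans (le_of_eq hX.symm)))
      · simp only [if_neg hiA, if_pos hjA]
        have hiSA : i ∈ S \ A := mem_sdiff.mpr ⟨hi, hiA⟩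
        exact (Finset.sdiff_disjoint.mono (hQsub j hjA)
          ((Finset.subset_biUnion_of_mem F hiSA).trans (le_of_eq hX.symm))).symm
      · simp only [if_neg hiA, if_neg hjA]
        exact hFdisj i (mem_sdiff.mpr ⟨hi, hiA⟩) j (mem_sdiff.mpr ⟨hj, hjA⟩) hij
    · apply subset_antisymm
      · intro x hx
        obtain ⟨i, hiS, hxi⟩ := mem_biUnion.mp hx
        by_cases hiA : i ∈ A
        · simp only [if_pos hiA] at hxi
          exact (mem_sdiff.mp (hQsub i hiA hxi)).1
        · simp only [if_neg hiA] at hxi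
          exact hFsub i (mem_sdiff.mpr ⟨hiS, hiA⟩) hxi
      · intro x hx
        by_cases hxX : x ∈ X
        · obtain ⟨i, hi, hxi⟩ := mem_biUnion.mp hxX
          refine mem_biUnion.mpr ⟨i, (mem_sdiff.mp hi).1, ?_⟩
          simp only [if_neg (mem_sdiff.mp hi).2]
          exact hxi
        · have hxRX : x ∈ R \ X := mem_sdiff.mpr ⟨hx, hxX⟩
          rw [← hQun] at hxRX
          obtain ⟨i, hiA, hxi⟩ := mem_biUnion.mp hxRX
          refine mem_biUnion.mpr ⟨i, hAS hiA, ?_⟩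
          simp only [if_pos hiA]
          exact hxi
    · intro i hi
      by_cases hiA : i ∈ A
      · simpa [hiA] using hQval i hiA
      · simpa [hiA] using hFval i (mem_sdiff.mpr ⟨hi, hiA⟩)

/-- Feasibility of residual self-feasible shares: if each agent's share value `s i` is
residual self-feasible for her valuation, then an `s`-allocation exists. -/
theorem rsf_share_feasible {M : Type*} [Fintype M] [DecidableEq M]
    (n : ℕ) (hn : 1 ≤ n)
    (v : Fin n → Finset M → NNReal)
    (hmono : ∀ i, ∀ S T : Finset M, S ⊆ T → v i S ≤ v i T)
    (hzero : ∀ i, v i ∅ = 0)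
    (s : Fin n → NNReal)
    (hs : ∀ i, RSF (v i) n (Finset.univ : Finset M) (s i)) :
    ∃ A : Fin n → Finset M, IsPartitionOn Finset.univ A ∧
      ∀ i, s i ≤ v i (A i) := by
  obtain ⟨A, hdisj, hun, hval⟩ := main_alloc v s n hn Finset.univ
    (by simp) Finset.univ (fun i _ => hs i)
  exact ⟨A, ⟨fun i j hij => hdisj i (mem_univ i) j (mem_univ j) hij, hun⟩,
    fun i => hval i (mem_univ i)⟩
end

section
/- In every allocation instance with monotone valuations there exists a partial allocation A_1,...,A_n (pairwise disjoint bundles, not necessarily covering all items) that is simultaneously RMMS (v_i(A_i) ≥ RMMS(M, v_i, n) for all i) and EFX (no agent i and item e ∈ A_j satisfy v_i(A_i) < v_i(A_j \ {e})). -/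
open Finset

/-!
Run a local search over states `(R, A)`: `R` is the set of agents still without a bundle, nobody
in `R` values a served agent's bundle at its share `r`, and no proper subset of a served bundle is
*coveted*, i.e. worth its share to an agent of `R` or strictly more than its own bundle to a served
agent. In a state with `R` nonempty pick `d ∈ R`: setting the served bundles aside, residual
self-feasibility of `r d` splits the remaining items into `#R` parts each worth `r d` to `d`, and
each part contains an inclusion-minimal coveted subset. If every such subset is worth its share to
some agent of `R`, an envy-free matching serves a nonempty set of agents of `R`; otherwise some
subset is coveted only by a served agent, who swaps to it, raising the total value. Hence
`(#R, -∑ value)` decreases lexicographically, so a state with `R = ∅` exists; there, every bundle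
is RMMS, and EFX is the fact that no `A j \ {e}` is coveted.
-/

theorem RSF.exists_parts_disjoint {M α ι : Type*} [DecidableEq M] [Preorder α]
    {v : Finset M → α} {n : ℕ} {X : Finset M} {t : α} (h : RSF v n X t)
    (s : Finset ι) (hs : #s < n) (B : ι → Finset M)
    (hdisj : ∀ i ∈ s, ∀ j ∈ s, i ≠ j → Disjoint (B i) (B j))
    (hsub : ∀ i ∈ s, B i ⊆ X) (hlt : ∀ i ∈ s, v (B i) < t) :
    ∃ P : Fin (n - #s) → Finset M, (∀ k l, k ≠ l → Disjoint (P k) (P l)) ∧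
      (∀ l, ∀ i ∈ s, Disjoint (P l) (B i)) ∧ ∀ l, t ≤ v (P l) := by
  set B' : Fin #s → Finset M := fun k => B (s.equivFin.symm k)
  obtain ⟨P, hPdisj, hPcover, hPt⟩ := h #s hs B'
    (fun k l hkl => hdisj _ (coe_mem _) _ (coe_mem _)
      (Subtype.val_injective.ne (s.equivFin.symm.injective.ne hkl)))
    (fun k => hsub _ (coe_mem _)) (fun k => hlt _ (coe_mem _))
  refine ⟨P, hPdisj, fun l i hi => ?_, hPt⟩
  have hP : P l ⊆ X \ univ.biUnion B' := hPcover ▸ subset_biUnion_of_mem P (mem_univ l)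
  have hB : B i ⊆ univ.biUnion B' := by
    simpa [B'] using subset_biUnion_of_mem B' (mem_univ (s.equivFin ⟨i, hi⟩))
  exact (sdiff_disjoint.mono_right hB).mono_left hP

theorem exists_injOn_of_forall_card_le_card_biUnion {α β : Type*} [DecidableEq β]
    (agents : Finset α) (adj : α → Finset β) (hne : agents.Nonempty)
    (hall : ∀ S ⊆ agents, #S ≤ #(S.biUnion adj)) :
    ∃ σ : α → β, Set.InjOn σ agents ∧ ∀ a ∈ agents, σ a ∈ adj a := by
  classical
  obtain ⟨f, hf, hfadj⟩ := (all_card_le_biUnion_card_iff_exists_injective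
    fun a : agents => adj a).1 fun s => by
      have hmap : (s.map (.subtype _)).biUnion adj = s.biUnion fun a => adj a := by
        ext; simp
      simpa [hmap] using hall _ fun a => property_of_mem_map_subtype s
  obtain ⟨a₀, ha₀⟩ := hne
  refine ⟨fun a => if h : a ∈ agents then f ⟨a, h⟩ else f ⟨a₀, ha₀⟩, ?_, fun a ha => ?_⟩
  · intro a ha b hb hab
    simp only [mem_coe] at ha hb
    simp only [dif_pos ha, dif_pos hb] at hab
    exact congrArg Subtype.val (hf hab)
  · simpa only [dif_pos ha] using hfadj ⟨a, ha⟩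

theorem exists_envyFree_matching {α β : Type*} [DecidableEq α] [DecidableEq β]
    (agents : Finset α) (adj : α → Finset β) (hne : agents.Nonempty)
    (hcard : #agents ≤ #(agents.biUnion adj)) :
    ∃ T ⊆ agents, T.Nonempty ∧ ∃ σ : α → β, Set.InjOn σ T ∧ (∀ a ∈ T, σ a ∈ adj a) ∧
      ∀ a ∈ agents, a ∉ T → ∀ t ∈ T, σ t ∉ adj a := by
  induction agents using Finset.strongInduction generalizing adj with
  | H agents ih =>
  by_cases hall : ∀ S ⊆ agents, #S ≤ #(S.biUnion adj)
  · obtain ⟨σ, hσ, hσadj⟩ :=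
      exists_injOn_of_forall_card_le_card_biUnion agents adj hne hall
    exact ⟨agents, subset_rfl, hne, σ, hσ, hσadj, fun a ha ha' => absurd ha ha'⟩
  push Not at hall
  obtain ⟨S, hSsub, hSlt⟩ := hall
  have hS : S.Nonempty := nonempty_iff_ne_empty.2 fun h => by simp [h] at hSlt
  -- Deleting a Hall violator `S` together with its neighbourhood keeps the surplus condition.
  have hrest : agents.biUnion adj \ S.biUnion adj ⊆
      (agents \ S).biUnion fun a => adj a \ S.biUnion adj := by
    intro b hb
    obtain ⟨hb, hbN⟩ := mem_sdiff.1 hb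
    obtain ⟨a, ha, hab⟩ := mem_biUnion.1 hb
    have haS : a ∉ S := fun haS => hbN (mem_biUnion.2 ⟨a, haS, hab⟩)
    exact mem_biUnion.2 ⟨a, mem_sdiff.2 ⟨ha, haS⟩, mem_sdiff.2 ⟨hab, hbN⟩⟩
  have hSne : S ≠ agents := by rintro rfl; omega
  obtain ⟨T, hT, hTne, σ, hσ, hσadj, henvy⟩ :=
    ih (agents \ S) (sdiff_ssubset hSsub hS) (fun a => adj a \ S.biUnion adj)
      (sdiff_nonempty.2 fun h => hSne (subset_antisymm hSsub h))
      (by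
        have := card_le_card hrest
        have := le_card_sdiff (S.biUnion adj) (agents.biUnion adj)
        rw [card_sdiff_of_subset hSsub]
        omega)
  refine ⟨T, hT.trans sdiff_subset, hTne, σ, hσ, fun a ha => (mem_sdiff.1 (hσadj a ha)).1,
    fun a ha haT t ht hσt => ?_⟩
  have hσN : σ t ∉ S.biUnion adj := (mem_sdiff.1 (hσadj t ht)).2
  by_cases haS : a ∈ S
  · exact hσN (mem_biUnion.2 ⟨a, haS, hσt⟩)
  · exact henvy a (mem_sdiff.2 ⟨ha, haS⟩) haT t ht (mem_sdiff.2 ⟨hσt, hσN⟩)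

section State

variable {ι M V : Type*} [Preorder V] (v : ι → Finset M → V) (r : ι → V)

def Coveted (R : Finset ι) (A : ι → Finset M) (W : Finset M) : Prop :=
  (∃ x ∈ R, r x ≤ v x W) ∨ ∃ y ∉ R, v y (A y) < v y W

structure IsValidState (R : Finset ι) (A : ι → Finset M) : Prop where
  eq_empty_of_mem : ∀ x ∈ R, A x = ∅
  disjoint : ∀ i j, i ≠ j → Disjoint (A i) (A j)
  le_value : ∀ y ∉ R, r y ≤ v y (A y)
  value_lt : ∀ y ∉ R, ∀ x ∈ R, v x (A y) < r x
  not_coveted : ∀ y, ∀ W ⊂ A y, ¬Coveted v r R A W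

theorem isValidState_univ [Fintype ι] : IsValidState v r univ fun _ => ∅ where
  eq_empty_of_mem _ _ := rfl
  disjoint _ _ _ := disjoint_empty_left _
  le_value y hy := absurd (mem_univ y) hy
  value_lt y hy := absurd (mem_univ y) hy
  not_coveted _ W hW := absurd hW (not_ssubset_empty W)

variable {v r} {R : Finset ι} {A : ι → Finset M}

theorem IsValidState.replace [DecidableEq ι] (h : IsValidState v r R A)
    (T : Finset ι) (Z : ι → Finset M)
    (hZdisj : ∀ i ∈ T, ∀ j ∈ T, i ≠ j → Disjoint (Z i) (Z j))
    (hZA : ∀ i ∈ T, ∀ j ∉ R, Disjoint (Z i) (A j))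
    (hle : ∀ i ∈ T, r i ≤ v i (Z i))
    (hgain : ∀ i ∈ T, i ∉ R → v i (A i) ≤ v i (Z i))
    (hlt : ∀ i ∈ T, ∀ x ∈ R, x ∉ T → v x (Z i) < r x)
    (hmin : ∀ i ∈ T, ∀ W ⊂ Z i, ¬Coveted v r R A W) :
    IsValidState v r (R \ T) fun i => if i ∈ T then Z i else A i := by
  have hcov : ∀ W, Coveted v r (R \ T) (fun i => if i ∈ T then Z i else A i) W →
      Coveted v r R A W := by
    rintro W (⟨x, hx, hxW⟩ | ⟨z, hz, hzW⟩)
    · exact .inl ⟨x, (mem_sdiff.1 hx).1, hxW⟩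
    by_cases hzT : z ∈ T
    · simp only [if_pos hzT] at hzW
      by_cases hzR : z ∈ R
      · exact .inl ⟨z, hzR, (hle z hzT).trans hzW.le⟩
      · exact .inr ⟨z, hzR, (hgain z hzT hzR).trans_lt hzW⟩
    · simp only [if_neg hzT] at hzW
      exact .inr ⟨z, fun hzR => hz (mem_sdiff.2 ⟨hzR, hzT⟩), hzW⟩
  have hZA' : ∀ i ∈ T, ∀ j ∉ T, Disjoint (Z i) (A j) := fun i hi j _ => by
    by_cases hjR : j ∈ R
    · simp [h.eq_empty_of_mem j hjR]
    · exact hZA i hi j hjR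
  refine ⟨fun x hx => ?_, fun i j hij => ?_, fun y hy => ?_, fun y hy x hx => ?_,
    fun y W hW hWcov => ?_⟩
  · rw [mem_sdiff] at hx
    simpa only [if_neg hx.2] using h.eq_empty_of_mem x hx.1
  · by_cases hi : i ∈ T <;> by_cases hj : j ∈ T <;> simp only [hi, hj, if_true, if_false]
    · exact hZdisj i hi j hj hij
    · exact hZA' i hi j hj
    · exact (hZA' j hj i hi).symm
    · exact h.disjoint i j hij
  · by_cases hyT : y ∈ T
    · simpa only [if_pos hyT] using hle y hyT
    · simpa only [if_neg hyT] using h.le_value y fun hyR => hy (mem_sdiff.2 ⟨hyR, hyT⟩)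
  · obtain ⟨hxR, hxT⟩ := mem_sdiff.1 hx
    by_cases hyT : y ∈ T
    · simpa only [if_pos hyT] using hlt y hyT x hxR hxT
    · simpa only [if_neg hyT] using
        h.value_lt y (fun hyR => hy (mem_sdiff.2 ⟨hyR, hyT⟩)) x hxR
  · by_cases hyT : y ∈ T
    · exact hmin y hyT W (by simpa only [if_pos hyT] using hW) (hcov W hWcov)
    · exact h.not_coveted y W (by simpa only [if_neg hyT] using hW) (hcov W hWcov)

end State

section Step

variable {ι M V : Type*} [DecidableEq ι] [LinearOrder V] {v : ι → Finset M → V} {r : ι → V}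
  {R : Finset ι} {A : ι → Finset M}

theorem IsValidState.exists_card_lt {κ : Type*} [Fintype κ]
    (h : IsValidState v r R A) (hR : R.Nonempty) (Z : κ → Finset M)
    (hcard : #R ≤ Fintype.card κ) (hZdisj : ∀ k l, k ≠ l → Disjoint (Z k) (Z l))
    (hZA : ∀ l, ∀ y ∉ R, Disjoint (Z l) (A y)) (hZmin : ∀ l, Minimal (Coveted v r R A) (Z l))
    (hwanted : ∀ l, ∃ x ∈ R, r x ≤ v x (Z l)) :
    ∃ R' A', IsValidState v r R' A' ∧ #R' < #R := by
  classical
  obtain ⟨T, hTR, hTne, σ, hσ, hσadj, henvy⟩ :=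
    exists_envyFree_matching R (fun x => {l | r x ≤ v x (Z l)}) hR (by
      rwa [show R.biUnion _ = univ from eq_univ_of_forall fun l => by simpa using hwanted l,
        card_univ])
  simp only [mem_filter, mem_univ, true_and] at hσadj henvy
  refine ⟨R \ T, _, h.replace T (Z ∘ σ) (fun i hi j hj hij => hZdisj _ _ (hσ.ne hi hj hij))
    (fun i _ => hZA _) hσadj (fun i hi hiR => absurd (hTR hi) hiR)
    (fun i hi x hx hxT => not_le.1 (henvy x hx hxT i hi))
    (fun i _ W hW => (hZmin _).not_prop_of_lt hW), card_lt_card (sdiff_ssubset hTR hTne)⟩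

variable [AddCommMonoid V] [IsOrderedCancelAddMonoid V] [Fintype ι]

theorem IsValidState.exists_sum_lt (h : IsValidState v r R A) (Z : Finset M)
    (hZA : ∀ y ∉ R, Disjoint Z (A y)) (hZmin : Minimal (Coveted v r R A) Z)
    (hunwanted : ∀ x ∈ R, v x Z < r x) :
    ∃ A', IsValidState v r R A' ∧ ∑ i, v i (A i) < ∑ i, v i (A' i) := by
  obtain ⟨x, hx, hxZ⟩ | ⟨y, hyR, hyZ⟩ := hZmin.prop
  · exact absurd (hunwanted x hx) (not_lt.2 hxZ)
  have h' := h.replace {y} (fun _ => Z)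
    (fun i hi j hj hij => absurd ((mem_singleton.1 hi).trans (mem_singleton.1 hj).symm) hij)
    (fun _ _ => hZA)
    (fun i hi => by rw [mem_singleton.1 hi]; exact (h.le_value y hyR).trans hyZ.le)
    (fun i hi _ => by rw [mem_singleton.1 hi]; exact hyZ.le)
    (fun _ _ x hx _ => hunwanted x hx) (fun _ _ W hW => hZmin.not_prop_of_lt hW)
  rw [sdiff_singleton_eq_erase, erase_eq_of_notMem hyR] at h'
  refine ⟨_, h', sum_lt_sum (fun i _ => ?_) ⟨y, mem_univ y, by simpa using hyZ⟩⟩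
  split_ifs with hi
  · rw [mem_singleton.1 hi]; exact hyZ.le
  · exact le_rfl

theorem IsValidState.exists_lt [Fintype M] [DecidableEq M]
    (hRSF : ∀ i, RSF (v i) (Fintype.card ι) univ (r i))
    (h : IsValidState v r R A) (hR : R.Nonempty) :
    ∃ R' A', IsValidState v r R' A' ∧
      (#R' < #R ∨ R' = R ∧ ∑ i, v i (A i) < ∑ i, v i (A' i)) := by
  obtain ⟨d, hd⟩ := hR
  have hcompl : #Rᶜ = Fintype.card ι - #R := card_compl R
  have hRcard : #R ≤ Fintype.card ι := card_le_univ R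
  have hRpos : 0 < #R := card_pos.2 ⟨d, hd⟩
  obtain ⟨P, hPdisj, hPA, hPd⟩ := (hRSF d).exists_parts_disjoint Rᶜ (by omega) A
    (fun i _ j _ hij => h.disjoint i j hij) (fun _ _ => subset_univ _)
    (fun y hy => h.value_lt y (mem_compl.1 hy) d hd)
  choose Z hZP hZmin using fun l =>
    exists_minimal_le_of_wellFoundedLT (Coveted v r R A) (P l) (.inl ⟨d, hd, hPd l⟩)
  have hZA : ∀ l, ∀ y ∉ R, Disjoint (Z l) (A y) := fun l y hy =>
    (hPA l y (mem_compl.2 hy)).mono_left (hZP l)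
  by_cases hwanted : ∀ l, ∃ x ∈ R, r x ≤ v x (Z l)
  · obtain ⟨R', A', h', hlt⟩ := h.exists_card_lt ⟨d, hd⟩ Z (by rw [Fintype.card_fin]; omega)
      (fun k l hkl => (hPdisj k l hkl).mono (hZP k) (hZP l)) hZA hZmin hwanted
    exact ⟨R', A', h', .inl hlt⟩
  · push Not at hwanted
    obtain ⟨l, hl⟩ := hwanted
    obtain ⟨A', h', hlt⟩ := h.exists_sum_lt (Z l) (hZA l) (hZmin l) hl
    exact ⟨R, A', h', .inr ⟨rfl, hlt⟩⟩

theorem exists_isValidState_empty [Fintype M] [DecidableEq M]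
    (hRSF : ∀ i, RSF (v i) (Fintype.card ι) univ (r i)) :
    ∃ A : ι → Finset M, IsValidState v r ∅ A := by
  obtain ⟨⟨R, A⟩, hRA, hmin⟩ := Set.exists_min_image
    {s : Finset ι × (ι → Finset M) | IsValidState v r s.1 s.2}
    (fun s => toLex (#s.1, OrderDual.toDual (∑ i, v i (s.2 i)))) (Set.toFinite _)
    ⟨(univ, fun _ => ∅), isValidState_univ v r⟩
  obtain rfl | hR := R.eq_empty_or_nonempty
  · exact ⟨A, hRA⟩
  obtain ⟨R', A', h', hlt⟩ := hRA.exists_lt hRSF hR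
  refine absurd (hmin (R', A') h') (not_le.2 (Prod.Lex.toLex_lt_toLex.2 ?_))
  rcases hlt with hlt | ⟨rfl, hlt⟩
  · exact .inl hlt
  · exact .inr ⟨rfl, hlt⟩

end Step

theorem exists_partial_rmms_efx_general {M : Type*} [Fintype M] [DecidableEq M]
    (n : ℕ)
    (v : Fin n → Finset M → NNReal)
    (r : Fin n → NNReal)
    (hr : ∀ i, IsGreatest {t : NNReal | RSF (v i) n (Finset.univ : Finset M) t} (r i)) :
    ∃ A : Fin n → Finset M,
      (∀ i j, i ≠ j → Disjoint (A i) (A j)) ∧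
      (∀ i, r i ≤ v i (A i)) ∧
      (∀ i j, ∀ e ∈ A j, v i (A j \ {e}) ≤ v i (A i)) := by
  obtain ⟨A, hA⟩ := exists_isValidState_empty (v := v) (r := r) fun i => by
    simpa using (hr i).1
  refine ⟨A, hA.disjoint, fun i => hA.le_value i (notMem_empty i), fun i j e he => ?_⟩
  have hW : A j \ {e} ⊂ A j := sdiff_ssubset (singleton_subset_iff.2 he) (singleton_nonempty e)
  exact not_lt.1 fun hlt => hA.not_coveted j _ hW (.inr ⟨i, notMem_empty i, hlt⟩)

/-- In every allocation instance with monotone valuations there is a partial allocation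
that is simultaneously RMMS and EFX. -/
theorem exists_partial_rmms_efx {M : Type*} [Fintype M] [DecidableEq M]
    (n : ℕ) (hn : 1 ≤ n)
    (v : Fin n → Finset M → NNReal)
    (hmono : ∀ i, ∀ S T : Finset M, S ⊆ T → v i S ≤ v i T)
    (hzero : ∀ i, v i ∅ = 0)
    (r : Fin n → NNReal)
    (hr : ∀ i, IsGreatest {t : NNReal | RSF (v i) n (Finset.univ : Finset M) t} (r i)) :
    ∃ A : Fin n → Finset M,
      (∀ i j, i ≠ j → Disjoint (A i) (A j)) ∧
      (∀ i, r i ≤ v i (A i)) ∧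
      (∀ i j, ∀ e ∈ A j, v i (A j \ {e}) ≤ v i (A i)) :=
  exists_partial_rmms_efx_general n v r hr
end

section
/- The RMMS share is monotone in the valuation: if v and v' are monotone valuations with v'(S) ≥ v(S) for every bundle S, then RMMS(M, v', n) ≥ RMMS(M, v, n). -/
open Finset

/-- The RMMS share is monotone in the valuation: pointwise larger valuations have RMMS
value at least as large. -/
theorem rmms_monotone {M : Type*} [Fintype M] [DecidableEq M] (n : ℕ) (hn : 1 ≤ n)
    (v v' : Finset M → NNReal)
    (hmono : ∀ S T : Finset M, S ⊆ T → v S ≤ v T) (hzero : v ∅ = 0)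
    (hmono' : ∀ S T : Finset M, S ⊆ T → v' S ≤ v' T) (hzero' : v' ∅ = 0)
    (hle : ∀ S : Finset M, v S ≤ v' S)
    (r r' : NNReal)
    (hr : IsGreatest {t : NNReal | RSF v n (Finset.univ : Finset M) t} r)
    (hr' : IsGreatest {t : NNReal | RSF v' n (Finset.univ : Finset M) t} r') :
    r ≤ r' := by
  apply hr'.2
  intro k hk B hdisj hsub hlt
  obtain ⟨P, hP1, hP2, hP3⟩ := hr.1 k hk B hdisj hsub
    (fun i => lt_of_le_of_lt (hle (B i)) (hlt i))
  exact ⟨P, hP1, hP2, fun i => le_trans (hP3 i) (hle (P i))⟩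
end

section
/- The RMMS share is 1-Lipschitz: if monotone valuations v and v' satisfy |v(S) − v'(S)| ≤ ε for every bundle S ⊆ M, then |RMMS(M, v, n) − RMMS(M, v', n)| ≤ ε. -/
open Finset

/-- The RMMS share is 1-Lipschitz: if `v` and `v'` differ by at most `ε` on every
bundle, then their RMMS values differ by at most `ε`. -/
theorem rmms_lipschitz {M : Type*} [Fintype M] [DecidableEq M] (n : ℕ) (hn : 1 ≤ n)
    (v v' : Finset M → ℝ)
    (hmono : ∀ S T : Finset M, S ⊆ T → v S ≤ v T) (hzero : v ∅ = 0)
    (hmono' : ∀ S T : Finset M, S ⊆ T → v' S ≤ v' T) (hzero' : v' ∅ = 0)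
    (ε : ℝ) (hε : 0 ≤ ε)
    (hclose : ∀ S : Finset M, |v S - v' S| ≤ ε)
    (r r' : ℝ)
    (hr : IsGreatest {t : ℝ | RSF v n (Finset.univ : Finset M) t} r)
    (hr' : IsGreatest {t : ℝ | RSF v' n (Finset.univ : Finset M) t} r') :
    |r - r'| ≤ ε := by
  have key : ∀ (u u' : Finset M → ℝ), (∀ S : Finset M, |u S - u' S| ≤ ε) →
      ∀ t, RSF u n (Finset.univ : Finset M) t → RSF u' n (Finset.univ : Finset M) (t - ε) := by
    intro u u' hc t ht k hk B hdisj hsub hlt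
    obtain ⟨P, hP1, hP2, hP3⟩ := ht k hk B hdisj hsub (fun i => by
      have := abs_le.mp (hc (B i))
      linarith [hlt i])
    exact ⟨P, hP1, hP2, fun i => by
      have := abs_le.mp (hc (P i))
      linarith [hP3 i]⟩
  have h1 : r - ε ≤ r' := hr'.2 (key v v' hclose r hr.1)
  have h2 : r' - ε ≤ r := hr.2 (key v' v (fun S => by rw [abs_sub_comm]; exact hclose S) r' hr'.1)
  rw [abs_le]; constructor <;> linarith
end

section
/- The RMMS share is self-maximizing: for any two monotone valuations v and v' on M, there exists a bundle T ⊆ M with v'(T) ≥ RMMS(M, v', n) and v(T) ≤ RMMS(M, v, n). -/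
open Finset

/-- The RMMS share is self-maximizing: for any two monotone valuations `v, v'` there is
a bundle `T` that is acceptable for `v'` (value at least `RMMS(v')`) whose `v`-value is at
most `RMMS(v)`. -/
theorem rmms_self_maximizing {M : Type*} [Fintype M] [DecidableEq M]
    (n : ℕ) (hn : 1 ≤ n)
    (v v' : Finset M → NNReal)
    (hmono : ∀ S T : Finset M, S ⊆ T → v S ≤ v T) (hzero : v ∅ = 0)
    (hmono' : ∀ S T : Finset M, S ⊆ T → v' S ≤ v' T) (hzero' : v' ∅ = 0)
    (r r' : NNReal)
    (hr : IsGreatest {t : NNReal | RSF v n (Finset.univ : Finset M) t} r)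
    (hr' : IsGreatest {t : NNReal | RSF v' n (Finset.univ : Finset M) t} r') :
    ∃ T : Finset M, r' ≤ v' T ∧ v T ≤ r := by
  classical
  set S : Finset (Finset M) := Finset.univ.filter (fun T => r' ≤ v' T) with hS
  -- S is nonempty: apply RSF v' at k = 0
  obtain ⟨P, hPdisj, hPun, hPval⟩ :=
    hr'.1 0 hn (fun i => (∅ : Finset M)) (fun i j _ => by simp)
      (fun i => by simp) (fun i => i.elim0)
  have hSne : S.Nonempty := by
    refine ⟨P ⟨0, by omega⟩, ?_⟩
    simp only [hS, Finset.mem_filter, Finset.mem_univ, true_and]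
    exact hPval _
  by_contra hcon
  push_neg at hcon
  have hmem : ∀ T ∈ S, r < v T := by
    intro T hT
    simp only [hS, Finset.mem_filter, Finset.mem_univ, true_and] at hT
    exact hcon T hT
  set t := S.inf' hSne v with ht
  have hrt : r < t := (Finset.lt_inf'_iff hSne).2 hmem
  have hle : ∀ T : Finset M, r' ≤ v' T → t ≤ v T := by
    intro T hT
    exact Finset.inf'_le _ (by simp [hS, hT])
  -- t is RSF for v
  have hRSF : RSF v n (Finset.univ : Finset M) t := by
    intro k hk B hBdisj hBsub hBval
    have hB' : ∀ i, v' (B i) < r' := by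
      intro i
      by_contra h
      push_neg at h
      exact absurd (hBval i) (not_lt.2 (hle _ h))
    obtain ⟨Q, hQdisj, hQun, hQval⟩ := hr'.1 k hk B hBdisj hBsub hB'
    exact ⟨Q, hQdisj, hQun, fun i => hle _ (hQval i)⟩
  exact absurd (hr.2 hRSF) (not_le.2 hrt)
end

section
/- RMMS dominates MXS: for every monotone valuation v, MXS(M, v, n) ≤ RMMS(M, v, n). In particular, the MXS value is residual self-feasible. -/
open Finset

section Aux
set_option linter.unusedSectionVars false
variable {M : Type*} [Fintype M] [DecidableEq M]

/-- Auxiliary: EFX-feasibility of a bundle `S` in the instance `(X, n)` for valuation `v`. -/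
def Feas (v : Finset M → NNReal) (n : ℕ) (X S : Finset M) : Prop :=
  ∃ A : Fin n → Finset M,
    (∀ i j, i ≠ j → Disjoint (A i) (A j)) ∧ Finset.univ.biUnion A = X ∧
    ∃ i, A i = S ∧ ∀ j, j ≠ i → ∀ e ∈ A j, v (A j \ {e}) ≤ v S

/-- The set of EFX-feasible values. -/
def vSet (v : Finset M → NNReal) (n : ℕ) (X : Finset M) : Set NNReal :=
  {y | ∃ S, y = v S ∧ Feas v n X S}

lemma trivial_partition (n : ℕ) (X : Finset M) :
    ∃ Q : Fin (n+1) → Finset M, (∀ i j, i ≠ j → Disjoint (Q i) (Q j)) ∧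
      Finset.univ.biUnion Q = X ∧ Q 0 = X ∧ ∀ j, j ≠ 0 → Q j = ∅ := by
  classical
  refine ⟨fun i => if i = 0 then X else ∅, ?_, ?_, if_pos rfl, fun j hj => if_neg hj⟩
  · intro i j hij
    by_cases hi : i = 0 <;> by_cases hj : j = 0 <;> simp_all
  · ext a
    simp only [mem_biUnion, mem_univ, true_and]
    constructor
    · rintro ⟨i, hi⟩
      by_cases h : i = 0
      · rwa [if_pos h] at hi
      · rw [if_neg h] at hi; exact absurd hi (notMem_empty a)
    · intro h; exact ⟨0, by simpa using h⟩

lemma vSet_exists_least (v : Finset M → NNReal) (n : ℕ) (hn : 0 < n) (X : Finset M) :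
    ∃ x, IsLeast (vSet v n X) x := by
  classical
  obtain ⟨m, rfl⟩ : ∃ m, n = m + 1 := ⟨n - 1, by omega⟩
  obtain ⟨Q, hd, hc, h0, he⟩ := trivial_partition m X
  have hne : (vSet v (m+1) X).Nonempty := by
    refine ⟨v X, X, rfl, Q, hd, hc, 0, h0, ?_⟩
    intro j hj e hmem
    rw [he j hj] at hmem
    exact absurd hmem (notMem_empty e)
  have hfin : (vSet v (m+1) X).Finite := by
    apply (Set.finite_range v).subset
    rintro y ⟨S, rfl, -⟩
    exact ⟨S, rfl⟩
  have hne' : hfin.toFinset.Nonempty := by simpa using hne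
  refine ⟨hfin.toFinset.min' hne', ?_, ?_⟩
  · have := hfin.toFinset.min'_mem hne'
    simpa using this
  · intro y hy
    exact hfin.toFinset.min'_le y (by simpa using hy)


lemma vSet_key (v : Finset M → NNReal) (hmono : ∀ S T : Finset M, S ⊆ T → v S ≤ v T)
    {n : ℕ} {X B : Finset M} {x x' : NNReal}
    (hx : IsLeast (vSet v (n+1) X) x) (hB : B ⊆ X) (hBx : v B < x)
    (hx' : IsLeast (vSet v n (X \ B)) x') : x ≤ x' := by
  obtain ⟨S', hS'val, A', hdisj', hcov', i', hSi', hEFX'⟩ := hx'.1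
  set A : Fin (n+1) → Finset M := Fin.cons B A' with hA
  have hA0 : A 0 = B := rfl
  have hAs : ∀ i : Fin n, A i.succ = A' i := fun i => rfl
  have hsub' : ∀ i, A' i ⊆ X \ B := fun i => by
    rw [← hcov']; exact Finset.subset_biUnion_of_mem A' (mem_univ i)
  have hdisj : ∀ i j, i ≠ j → Disjoint (A i) (A j) := by
    intro i j hij
    rcases Fin.eq_zero_or_eq_succ i with rfl | ⟨i0, rfl⟩ <;>
      rcases Fin.eq_zero_or_eq_succ j with rfl | ⟨j0, rfl⟩
    · exact absurd rfl hij
    · rw [hA0, hAs]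
      exact disjoint_of_subset_right (hsub' j0) disjoint_sdiff
    · rw [hA0, hAs]
      exact (disjoint_of_subset_right (hsub' i0) disjoint_sdiff).symm
    · rw [hAs, hAs]
      exact hdisj' i0 j0 (fun h => hij (by rw [h]))
  have hcov : Finset.univ.biUnion A = X := by
    ext a
    simp only [mem_biUnion, mem_univ, true_and]
    rw [Fin.exists_fin_succ]
    have h2 : (∃ i, a ∈ A' i) ↔ a ∈ X \ B := by
      rw [← hcov']; simp
    simp only [hA0, hAs, h2, mem_sdiff]
    constructor
    · rintro (h | ⟨h1, -⟩)
      · exact hB h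
      · exact h1
    · intro ha
      by_cases hab : a ∈ B
      · exact Or.inl hab
      · exact Or.inr ⟨ha, hab⟩
  by_cases hc : ∀ e ∈ B, v (B \ {e}) ≤ v S'
  · have hmem : v S' ∈ vSet v (n+1) X := by
      refine ⟨S', rfl, A, hdisj, hcov, i'.succ, by rw [hAs]; exact hSi', ?_⟩
      intro j hj e he
      rcases Fin.eq_zero_or_eq_succ j with rfl | ⟨j0, rfl⟩
      · rw [hA0] at he ⊢
        exact hc e he
      · rw [hAs] at he ⊢
        exact hEFX' j0 (fun h => hj (by rw [h])) e he
    rw [hS'val]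
    exact hx.2 hmem
  · push_neg at hc
    obtain ⟨e0, he0, hgt⟩ := hc
    have hmem : v B ∈ vSet v (n+1) X := by
      refine ⟨B, rfl, A, hdisj, hcov, 0, hA0, ?_⟩
      intro j hj e he
      rcases Fin.eq_zero_or_eq_succ j with rfl | ⟨j0, rfl⟩
      · exact absurd rfl hj
      · rw [hAs] at he ⊢
        have h1 : v ((A' j0) \ {e}) ≤ v S' := by
          rcases eq_or_ne j0 i' with rfl | hne
          · rw [hSi']
            exact hmono _ _ sdiff_subset
          · exact hEFX' j0 hne e he
        calc v ((A' j0) \ {e}) ≤ v S' := h1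
          _ ≤ v (B \ {e0}) := le_of_lt hgt
          _ ≤ v B := hmono _ _ sdiff_subset
    exact absurd (hx.2 hmem) (not_le.mpr hBx)

lemma vSet_base (v : Finset M → NNReal) (hmono : ∀ S T : Finset M, S ⊆ T → v S ≤ v T)
    (n : ℕ) (X : Finset M) (x : NNReal) (hx : IsLeast (vSet v (n+1) X) x) :
    ∃ Q : Fin (n+1) → Finset M,
      (∀ i j, i ≠ j → Disjoint (Q i) (Q j)) ∧ Finset.univ.biUnion Q = X ∧
      ∀ i, x ≤ v (Q i) := by
  classical
  set PT : Finset (Fin (n+1) → Finset M) :=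
    Finset.univ.filter (fun Q => (∀ i j, i ≠ j → Disjoint (Q i) (Q j)) ∧
      Finset.univ.biUnion Q = X) with hPTdef
  have hPTne : PT.Nonempty := by
    obtain ⟨Q, hd, hc, -, -⟩ := trivial_partition n X
    exact ⟨Q, by simp only [hPTdef, mem_filter]; exact ⟨mem_univ _, hd, hc⟩⟩
  have hne : (Finset.univ : Finset (Fin (n+1))).Nonempty := ⟨0, mem_univ 0⟩
  set μ : (Fin (n+1) → Finset M) → NNReal :=
    fun Q => Finset.univ.inf' hne (fun i => v (Q i)) with hμdef
  set F : (Fin (n+1) → Finset M) → Finset (Fin (n+1)) :=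
    fun Q => Finset.univ.filter (fun l => v (Q l) = μ Q) with hFdef
  set W : ℕ := Fintype.card M + 1 with hWdef
  set ψ : (Fin (n+1) → Finset M) → ℕ :=
    fun Q => (n + 1 - (F Q).card) * W + ∑ l ∈ F Q, (Q l).card with hψdef
  obtain ⟨Q1, hQ1PT, hQ1max⟩ := PT.exists_max_image μ hPTne
  set PT2 : Finset (Fin (n+1) → Finset M) := PT.filter (fun Q => μ Q = μ Q1) with hPT2def
  have hQ1PT2 : Q1 ∈ PT2 := mem_filter.mpr ⟨hQ1PT, rfl⟩
  obtain ⟨Q, hQPT2, hQmax⟩ := PT2.exists_max_image ψ ⟨Q1, hQ1PT2⟩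
  have hQPT : Q ∈ PT := (mem_filter.mp hQPT2).1
  have hQμ1 : μ Q = μ Q1 := (mem_filter.mp hQPT2).2
  obtain ⟨hQdisj, hQcov⟩ := (mem_filter.mp hQPT).2
  obtain ⟨j, -, hj0⟩ := Finset.exists_mem_eq_inf' hne (fun i => v (Q i))
  have hj : μ Q = v (Q j) := hj0
  have hμle : ∀ m, μ Q ≤ v (Q m) := fun m => Finset.inf'_le _ (mem_univ m)
  have hszQ : ∑ l ∈ F Q, (Q l).card < W := by
    have h1 : ∑ l ∈ F Q, (Q l).card ≤ ∑ l ∈ Finset.univ, (Q l).card :=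
      Finset.sum_le_sum_of_subset (filter_subset _ _)
    have h2 : ∑ l ∈ Finset.univ, (Q l).card = (Finset.univ.biUnion Q).card :=
      (Finset.card_biUnion (fun a _ b _ h => hQdisj a b h)).symm
    have h3 : (Finset.univ.biUnion Q).card ≤ Fintype.card M := by
      rw [hQcov]; exact Finset.card_le_univ X
    omega
  have hcntQ : (F Q).card ≤ n + 1 := by
    have := Finset.card_filter_le (Finset.univ : Finset (Fin (n+1))) (fun l => v (Q l) = μ Q)
    simpa [hFdef] using this
  have hEFX : ∀ m, m ≠ j → ∀ e ∈ Q m, v ((Q m) \ {e}) ≤ v (Q j) := by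
    intro m hmj e he
    by_contra hgt0
    push_neg at hgt0
    have hgt : μ Q < v ((Q m) \ {e}) := by rw [hj]; exact hgt0
    clear hj0
    have hQmgt : μ Q < v (Q m) := lt_of_lt_of_le hgt (hmono _ _ sdiff_subset)
    have henj : e ∉ Q j := disjoint_left.mp (hQdisj m j hmj) he
    set Q' : Fin (n+1) → Finset M :=
      Function.update (Function.update Q m ((Q m) \ {e})) j (insert e (Q j)) with hQ'def
    have hQ'j : Q' j = insert e (Q j) := by simp [hQ'def]
    have hQ'm : Q' m = (Q m) \ {e} := by
      rw [hQ'def, Function.update_of_ne hmj, Function.update_self]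
    have hQ'o : ∀ l, l ≠ j → l ≠ m → Q' l = Q l := by
      intro l h1 h2
      rw [hQ'def, Function.update_of_ne h1, Function.update_of_ne h2]
    have hQ'sub : ∀ l, l ≠ j → Q' l ⊆ Q l := by
      intro l h1
      by_cases h2 : l = m
      · subst h2; rw [hQ'm]; exact sdiff_subset
      · rw [hQ'o l h1 h2]
    have hQ'en : ∀ l, l ≠ j → e ∉ Q' l := by
      intro l h1 hmem
      have hel : e ∈ Q l := hQ'sub l h1 hmem
      by_cases h2 : l = m
      · subst h2; rw [hQ'm] at hmem; simp at hmem
      · exact disjoint_left.mp (hQdisj m l (Ne.symm h2)) he hel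
    have hdisjj : ∀ b, b ≠ j → Disjoint (Q' j) (Q' b) := by
      intro b hb
      rw [hQ'j, Finset.disjoint_insert_left]
      exact ⟨hQ'en b hb, disjoint_of_subset_right (hQ'sub b hb) (hQdisj j b (Ne.symm hb))⟩
    have hQ'disj : ∀ a b, a ≠ b → Disjoint (Q' a) (Q' b) := by
      intro a b hab
      rcases eq_or_ne a j with rfl | haj
      · exact hdisjj b (Ne.symm hab)
      · rcases eq_or_ne b j with rfl | hbj
        · exact (hdisjj a haj).symm
        · exact disjoint_of_subset_left (hQ'sub a haj)
            (disjoint_of_subset_right (hQ'sub b hbj) (hQdisj a b hab))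
    have hXiff : ∀ a, (∃ l, a ∈ Q l) ↔ a ∈ X := by
      intro a; rw [← hQcov]; simp
    have hQ'cov : Finset.univ.biUnion Q' = X := by
      ext a
      simp only [mem_biUnion, mem_univ, true_and]
      constructor
      · rintro ⟨l, hl⟩
        by_cases hlj : l = j
        · rw [hlj, hQ'j] at hl
          rcases mem_insert.mp hl with rfl | hl'
          · exact (hXiff a).mp ⟨m, he⟩
          · exact (hXiff a).mp ⟨j, hl'⟩
        · exact (hXiff a).mp ⟨l, hQ'sub l hlj hl⟩
      · intro ha
        obtain ⟨l, hl⟩ := (hXiff a).mpr ha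
        by_cases hae : a = e
        · subst hae; exact ⟨j, by rw [hQ'j]; exact mem_insert_self _ _⟩
        · by_cases hlj : l = j
          · rw [hlj] at hl
            exact ⟨j, by rw [hQ'j]; exact mem_insert_of_mem hl⟩
          · by_cases hlm : l = m
            · rw [hlm] at hl
              exact ⟨m, by rw [hQ'm]; exact mem_sdiff.mpr ⟨hl, by simpa using hae⟩⟩
            · exact ⟨l, by rw [hQ'o l hlj hlm]; exact hl⟩
    have hQ'PT : Q' ∈ PT := by
      simp only [hPTdef, mem_filter]; exact ⟨mem_univ _, hQ'disj, hQ'cov⟩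
    have hvj' : v (Q j) ≤ v (Q' j) := by
      rw [hQ'j]; exact hmono _ _ (subset_insert _ _)
    have hall : ∀ l, μ Q ≤ v (Q' l) := by
      intro l
      rcases eq_or_ne l j with rfl | h1
      · exact le_trans (le_of_eq hj) hvj'
      · rcases eq_or_ne l m with rfl | h2
        · rw [hQ'm]; exact le_of_lt hgt
        · rw [hQ'o l h1 h2]; exact hμle l
    have hμ'ge : μ Q ≤ μ Q' := Finset.le_inf' _ _ (fun l _ => hall l)
    have hμmax : μ Q' ≤ μ Q := by rw [hQμ1]; exact hQ1max Q' hQ'PT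
    have hμ'eq : μ Q' = μ Q := le_antisymm hμmax hμ'ge
    have hQ'PT2 : Q' ∈ PT2 := by
      simp only [hPT2def, mem_filter]
      exact ⟨hQ'PT, hμ'eq.trans hQμ1⟩
    have hjF : j ∈ F Q := by
      simp only [hFdef, mem_filter]; exact ⟨mem_univ _, hj.symm⟩
    have hmF : m ∉ F Q := by
      simp only [hFdef, mem_filter]
      rintro ⟨-, hh⟩
      exact (ne_of_gt hQmgt) hh
    have hψlt : ψ Q < ψ Q' := by
      rcases (hall j).lt_or_eq with hjlt | hjeq
      · -- case A : μ Q < v (Q' j) ; j leaves the minimum-set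
        have hjF' : j ∉ F Q' := by
          simp only [hFdef, mem_filter, hμ'eq]
          rintro ⟨-, hh⟩
          exact (ne_of_gt hjlt) hh
        have hsubF : F Q' ⊆ F Q := by
          intro l hl
          simp only [hFdef, mem_filter, hμ'eq] at hl
          obtain ⟨-, hl⟩ := hl
          rcases eq_or_ne l j with rfl | h1
          · exact absurd hl (ne_of_gt hjlt)
          · rcases eq_or_ne l m with rfl | h2
            · rw [hQ'm] at hl
              exact absurd hl (ne_of_gt hgt)
            · rw [hQ'o l h1 h2] at hl
              simp only [hFdef, mem_filter]
              exact ⟨mem_univ _, hl⟩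
        have hcnt : (F Q').card < (F Q).card :=
          Finset.card_lt_card ⟨hsubF, fun h => hjF' (h hjF)⟩
        have h3 : (n + 1 - (F Q).card) + 1 ≤ n + 1 - (F Q').card := by omega
        calc ψ Q = (n + 1 - (F Q).card) * W + ∑ l ∈ F Q, (Q l).card := rfl
          _ < (n + 1 - (F Q).card) * W + W := by omega
          _ = ((n + 1 - (F Q).card) + 1) * W := by ring
          _ ≤ (n + 1 - (F Q').card) * W := Nat.mul_le_mul_right W h3
          _ ≤ (n + 1 - (F Q').card) * W + ∑ l ∈ F Q', (Q' l).card := Nat.le_add_right _ _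
          _ = ψ Q' := rfl
      · -- case B : v (Q' j) = μ Q ; minimum-set unchanged, its size grows
        have hFeq : F Q' = F Q := by
          simp only [hFdef]
          apply Finset.filter_congr
          intro l _
          rw [hμ'eq]
          rcases eq_or_ne l j with rfl | h1
          · exact iff_of_true hjeq.symm hj.symm
          · rcases eq_or_ne l m with rfl | h2
            · rw [hQ'm]
              exact iff_of_false (ne_of_gt hgt) (ne_of_gt hQmgt)
            · rw [hQ'o l h1 h2]
        have hsum : ∑ l ∈ F Q, (Q l).card < ∑ l ∈ F Q, (Q' l).card := by
          apply Finset.sum_lt_sum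
          · intro l hl
            rcases eq_or_ne l j with rfl | hlj
            · rw [hQ'j, card_insert_of_notMem henj]; omega
            · have hlm : l ≠ m := by rintro rfl; exact hmF hl
              rw [hQ'o l hlj hlm]
          · exact ⟨j, hjF, by rw [hQ'j, card_insert_of_notMem henj]; omega⟩
        calc ψ Q = (n + 1 - (F Q).card) * W + ∑ l ∈ F Q, (Q l).card := rfl
          _ < (n + 1 - (F Q).card) * W + ∑ l ∈ F Q, (Q' l).card := Nat.add_lt_add_left hsum _
          _ = ψ Q' := by rw [hψdef]; simp only [hFeq]
    exact absurd (hQmax Q' hQ'PT2) (not_le.mpr hψlt)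
  have hxle : x ≤ v (Q j) := hx.2 ⟨Q j, rfl, Q, hQdisj, hQcov, j, rfl, hEFX⟩
  refine ⟨Q, hQdisj, hQcov, fun i => le_trans hxle ?_⟩
  rw [← hj]
  exact hμle i


lemma vSet_main (v : Finset M → NNReal) (hmono : ∀ S T : Finset M, S ⊆ T → v S ≤ v T) :
    ∀ (k p : ℕ) (X : Finset M) (x : NNReal),
      IsLeast (vSet v (k + (p + 1)) X) x →
      ∀ B : Fin k → Finset M,
        (∀ i j, i ≠ j → Disjoint (B i) (B j)) → (∀ i, B i ⊆ X) → (∀ i, v (B i) < x) →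
        ∃ P : Fin (p + 1) → Finset M,
          (∀ i j, i ≠ j → Disjoint (P i) (P j)) ∧
          Finset.univ.biUnion P = X \ Finset.univ.biUnion B ∧ ∀ i, x ≤ v (P i) := by
  intro k
  induction k with
  | zero =>
    intro p X x hx B hBd hBs hBx
    rw [Nat.zero_add] at hx
    obtain ⟨Q, h1, h2, h3⟩ := vSet_base v hmono p X x hx
    refine ⟨Q, h1, ?_, h3⟩
    rw [h2]
    have hBe : Finset.univ.biUnion B = ∅ := by simp
    rw [hBe, sdiff_empty]
  | succ k ih =>
    intro p X x hx B hBd hBs hBx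
    rw [show k + 1 + (p + 1) = (k + (p + 1)) + 1 by omega] at hx
    obtain ⟨x', hx'⟩ := vSet_exists_least v (k + (p + 1)) (by omega) (X \ B 0)
    have hxx' : x ≤ x' := vSet_key v hmono hx (hBs 0) (hBx 0) hx'
    obtain ⟨P, hPd, hPc, hPv⟩ := ih p (X \ B 0) x' hx' (fun i => B i.succ)
      (fun i j h => hBd _ _ (fun hh => h (Fin.succ_injective _ hh)))
      (fun i => Finset.subset_sdiff.mpr ⟨hBs _, hBd _ _ (Fin.succ_ne_zero i)⟩)
      (fun i => lt_of_lt_of_le (hBx _) hxx')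
    refine ⟨P, hPd, ?_, fun i => le_trans hxx' (hPv i)⟩
    rw [hPc]
    ext a
    simp only [mem_sdiff, mem_biUnion, mem_univ, true_and]
    rw [Fin.exists_fin_succ]
    tauto

end Aux

/-- RMMS dominates MXS: `MXS ≤ RMMS`, and in particular the MXS value is residual
self-feasible. -/
theorem mxs_le_rmms {M : Type*} [Fintype M] [DecidableEq M] (n : ℕ) (hn : 1 ≤ n)
    (v : Finset M → NNReal)
    (hmono : ∀ S T : Finset M, S ⊆ T → v S ≤ v T) (hzero : v ∅ = 0)
    (x r : NNReal)
    (hx : IsLeast {y : NNReal | ∃ S : Finset M, y = v S ∧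
        ∃ A : Fin n → Finset M, IsPartitionOn Finset.univ A ∧
          ∃ i, A i = S ∧ ∀ j, j ≠ i → ∀ e ∈ A j, v (A j \ {e}) ≤ v S} x)
    (hr : IsGreatest {t : NNReal | RSF v n (Finset.univ : Finset M) t} r) :
    x ≤ r ∧ RSF v n (Finset.univ : Finset M) x := by
  classical
  have hset : {y : NNReal | ∃ S : Finset M, y = v S ∧
      ∃ A : Fin n → Finset M, IsPartitionOn Finset.univ A ∧
        ∃ i, A i = S ∧ ∀ j, j ≠ i → ∀ e ∈ A j, v (A j \ {e}) ≤ v S} = vSet v n Finset.univ := by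
    ext y
    simp only [vSet, Feas, IsPartitionOn, Set.mem_setOf_eq]
    constructor
    · rintro ⟨S, h1, A, ⟨h2, h3⟩, h4⟩
      exact ⟨S, h1, A, h2, h3, h4⟩
    · rintro ⟨S, h1, A, h2, h3, h4⟩
      exact ⟨S, h1, A, ⟨h2, h3⟩, h4⟩
  have hx2 : IsLeast (vSet v n (Finset.univ : Finset M)) x := hset ▸ hx
  have hRSF : RSF v n (Finset.univ : Finset M) x := by
    intro k hk B hBd hBs hBx
    have hx3 := hx2
    rw [show n = k + ((n - k - 1) + 1) by omega] at hx3
    rw [show n - k = (n - k - 1) + 1 by omega]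
    exact vSet_main v hmono k (n - k - 1) Finset.univ x hx3 B hBd hBs hBx
  exact ⟨hr.2 hRSF, hRSF⟩
end

section
/- MMS dominates MXS: for every monotone valuation v, MXS(M, v, n) ≤ MMS(M, v, n); hence every MMS allocation is an MXS allocation. -/
open Finset

/-!
Among all `n`-partitions of the items take one maximising, lexicographically, the minimum bundle
value and then a weight sum favouring large minimum bundles. A minimum bundle `S` of it has no EFX
envy: if `v (A j \ {e}) > v S`, moving `e` into `S` would increase this potential. Handing `S` to
agent `i` (after relabelling the bundles) shows `MXS ≤ v S`, and `v S ≤ MMS` since `S` is the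
least bundle of a partition.
-/

section Partition

variable {M : Type*} [DecidableEq M] {n : ℕ} {X : Finset M} {A : Fin n → Finset M}

theorem isPartitionOn_iff :
    IsPartitionOn X A ↔ (∀ k l, ∀ x ∈ A k, x ∈ A l → k = l) ∧ ∀ x, x ∈ X ↔ ∃ k, x ∈ A k := by
  refine and_congr ⟨fun h k l x hk hl => by_contra fun hkl => disjoint_left.mp (h k l hkl) hk hl,
    fun h k l hkl => disjoint_left.mpr fun x hk hl => hkl (h k l x hk hl)⟩ ?_
  simp only [Finset.ext_iff, mem_biUnion, mem_univ, true_and]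
  exact forall_congr' fun _ => iff_comm

theorem IsPartitionOn.eq_of_mem {x : M} {k l : Fin n} (hA : IsPartitionOn X A) (hk : x ∈ A k)
    (hl : x ∈ A l) : k = l :=
  (isPartitionOn_iff.mp hA).1 k l x hk hl

theorem exists_isPartitionOn [NeZero n] (X : Finset M) :
    ∃ A : Fin n → Finset M, IsPartitionOn X A :=
  ⟨fun k => if k = 0 then X else ∅, isPartitionOn_iff.mpr
    ⟨fun k l x => by split_ifs <;> simp_all,
      fun x => ⟨fun hx => ⟨0, by simpa⟩, fun ⟨k, hk⟩ => by split_ifs at hk <;> simp_all⟩⟩⟩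

theorem IsPartitionOn.comp_equiv (hA : IsPartitionOn X A) (σ : Equiv.Perm (Fin n)) :
    IsPartitionOn X (A ∘ σ) := by
  rw [isPartitionOn_iff] at hA ⊢
  exact ⟨fun k l x hk hl => σ.injective (hA.1 _ _ x hk hl),
    fun x => (hA.2 x).trans (σ.exists_congr fun _ => Iff.rfl).symm⟩

def moveItem (A : Fin n → Finset M) (e : M) (s : Fin n) : Fin n → Finset M :=
  fun k => if k = s then insert e (A s) else (A k).erase e

variable {e x : M} {s j k : Fin n}

theorem moveItem_self : moveItem A e s s = insert e (A s) := if_pos rfl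

theorem moveItem_of_ne (hks : k ≠ s) : moveItem A e s k = (A k).erase e := if_neg hks

theorem mem_moveItem : x ∈ moveItem A e s k ↔ if x = e then k = s else x ∈ A k := by
  unfold moveItem
  split_ifs <;> simp_all

theorem isPartitionOn_moveItem (hA : IsPartitionOn X A) (he : e ∈ X) (s : Fin n) :
    IsPartitionOn X (moveItem A e s) := by
  rw [isPartitionOn_iff] at hA ⊢
  simp only [mem_moveItem]
  refine ⟨fun k l x hk hl => ?_, fun x => ?_⟩
  · split_ifs at hk hl
    exacts [hk.trans hl.symm, hA.1 k l x hk hl]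
  · split_ifs with hx
    · simp [hx, he]
    · exact hA.2 x

theorem moveItem_of_ne_of_ne (hA : IsPartitionOn X A) (he : e ∈ A j) (hks : k ≠ s)
    (hkj : k ≠ j) : moveItem A e s k = A k :=
  (moveItem_of_ne hks).trans (erase_eq_of_notMem fun hek => hkj (hA.eq_of_mem hek he))

end Partition

section Potential

variable {M : Type*} {n : ℕ} [NeZero n]

noncomputable def minValue (v : Finset M → NNReal) (A : Fin n → Finset M) : NNReal :=
  univ.inf' univ_nonempty (v ∘ A)

noncomputable def sizeWeight [Fintype M] (v : Finset M → NNReal) (m : NNReal) (B : Finset M) :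
    ℕ :=
  if v B ≤ m then #B else Fintype.card M + 1

/-- Moving an item into a minimum bundle either raises the minimum value, or keeps it and
raises the weight sum: the receiving bundle grows or leaves the minimum bundles. -/
noncomputable def potential [Fintype M] (v : Finset M → NNReal) (A : Fin n → Finset M) :
    NNReal ×ₗ ℕ :=
  toLex (minValue v A, ∑ k, sizeWeight v (minValue v A) (A k))

variable {v : Finset M → NNReal} {A : Fin n → Finset M} {m : NNReal}

theorem minValue_eq_of_forall_le {s : Fin n} (hs : ∀ k, v (A s) ≤ v (A k)) :
    minValue v A = v (A s) :=
  le_antisymm (inf'_le _ (mem_univ s)) (le_inf' _ _ fun k _ => hs k)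

theorem le_minValue (h : ∀ k, m ≤ v (A k)) : m ≤ minValue v A :=
  le_inf' _ _ fun k _ => h k

variable [Fintype M] {B : Finset M}

theorem card_le_sizeWeight : #B ≤ sizeWeight v m B := by
  unfold sizeWeight
  split_ifs
  exacts [le_rfl, (card_le_univ B).trans (Nat.le_succ _)]

theorem sizeWeight_of_le (h : v B ≤ m) : sizeWeight v m B = #B := if_pos h

theorem sizeWeight_of_lt (h : m < v B) : sizeWeight v m B = Fintype.card M + 1 := if_neg h.not_ge

variable [DecidableEq M]

theorem potential_lt_moveItem {X : Finset M} {s j : Fin n} {e : M} (hmono : Monotone v)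
    (hA : IsPartitionOn X A) (hs : ∀ k, v (A s) ≤ v (A k)) (hjs : j ≠ s) (he : e ∈ A j)
    (henvy : v (A s) < v ((A j).erase e)) :
    potential v A < potential v (moveItem A e s) := by
  have heA : e ∉ A s := fun h => hjs (hA.eq_of_mem he h)
  have hge : ∀ k, v (A s) ≤ v (moveItem A e s k) := by
    intro k
    rcases eq_or_ne k s with rfl | hks
    · rw [moveItem_self]; exact hmono (subset_insert _ _)
    rcases eq_or_ne k j with rfl | hkj
    · rw [moveItem_of_ne hks]; exact henvy.le
    · rw [moveItem_of_ne_of_ne hA he hks hkj]; exact hs k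
  unfold potential
  rw [minValue_eq_of_forall_le hs]
  rcases (le_minValue hge).lt_or_eq with hlt | heq
  · exact Prod.Lex.toLex_lt_toLex.mpr (Or.inl hlt)
  refine Prod.Lex.toLex_lt_toLex.mpr (Or.inr ⟨heq, ?_⟩)
  rw [← heq]
  have hlt_s : sizeWeight v (v (A s)) (A s) < sizeWeight v (v (A s)) (moveItem A e s s) :=
    calc sizeWeight v (v (A s)) (A s) = #(A s) := sizeWeight_of_le le_rfl
      _ < #(insert e (A s)) := card_lt_card (ssubset_insert heA)
      _ ≤ _ := moveItem_self (A := A) ▸ card_le_sizeWeight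
  refine sum_lt_sum (fun k _ => ?_) ⟨s, mem_univ s, hlt_s⟩
  rcases eq_or_ne k s with rfl | hks
  · exact hlt_s.le
  rcases eq_or_ne k j with rfl | hkj
  · rw [sizeWeight_of_lt (henvy.trans_le (hmono (erase_subset e _))), moveItem_of_ne hks,
      sizeWeight_of_lt henvy]
  · rw [moveItem_of_ne_of_ne hA he hks hkj]

theorem exists_isPartitionOn_min_efx (hmono : Monotone v) :
    ∃ A : Fin n → Finset M, IsPartitionOn univ A ∧ ∃ s, (∀ k, v (A s) ≤ v (A k)) ∧
      ∀ j ≠ s, ∀ e ∈ A j, v (A j \ {e}) ≤ v (A s) := by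
  obtain ⟨A, hA, hmax⟩ := Set.exists_max_image {A : Fin n → Finset M | IsPartitionOn univ A}
    (potential v) (Set.toFinite _) (exists_isPartitionOn univ)
  obtain ⟨s, -, hs⟩ := exists_min_image univ (v ∘ A) univ_nonempty
  have hmin : ∀ k, v (A s) ≤ v (A k) := fun k => hs k (mem_univ k)
  refine ⟨A, hA, s, hmin, fun j hjs e he => ?_⟩
  rw [sdiff_singleton_eq_erase]
  by_contra! henvy
  exact (hmax _ (isPartitionOn_moveItem hA (mem_univ e) s)).not_gt
    (potential_lt_moveItem hmono hA hmin hjs he henvy)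

end Potential

theorem mxs_le_mms_general {M : Type*} [Fintype M] [DecidableEq M] (n : ℕ) (hn : 1 ≤ n)
    (v : Fin n → Finset M → NNReal)
    (hmono : ∀ i, ∀ S T : Finset M, S ⊆ T → v i S ≤ v i T)
    (μ x : Fin n → NNReal)
    (hμ : ∀ i, IsGreatest {t : NNReal | ∃ P : Fin n → Finset M,
        IsPartitionOn Finset.univ P ∧ ∀ j, t ≤ v i (P j)} (μ i))
    (hx : ∀ i, IsLeast {y : NNReal | ∃ S : Finset M, y = v i S ∧
        ∃ A : Fin n → Finset M, IsPartitionOn Finset.univ A ∧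
          A i = S ∧ ∀ j, j ≠ i → ∀ e ∈ A j, v i (A j \ {e}) ≤ v i S} (x i)) :
    (∀ i, x i ≤ μ i) ∧
      ∀ A : Fin n → Finset M, IsPartitionOn Finset.univ A →
        (∀ i, μ i ≤ v i (A i)) → ∀ i, x i ≤ v i (A i) := by
  have : NeZero n := NeZero.of_pos hn
  have hle : ∀ i, x i ≤ μ i := by
    intro i
    obtain ⟨A, hA, s, hmin, hefx⟩ := exists_isPartitionOn_min_efx (n := n) fun S T => hmono i S T
    calc x i ≤ v i (A s) :=
          (hx i).2 ⟨A s, rfl, A ∘ Equiv.swap i s, hA.comp_equiv _, by simp,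
            fun j hj e he => hefx _ (by simpa using (Equiv.swap i s).injective.ne hj) e he⟩
      _ ≤ μ i := (hμ i).2 ⟨A, hA, hmin⟩
  exact ⟨hle, fun A _ hA i => (hle i).trans (hA i)⟩

/-- MMS dominates MXS: `MXS ≤ MMS`; hence every MMS allocation is an MXS allocation. -/
theorem mxs_le_mms {M : Type*} [Fintype M] [DecidableEq M] (n : ℕ) (hn : 1 ≤ n)
    (v : Fin n → Finset M → NNReal)
    (hmono : ∀ i, ∀ S T : Finset M, S ⊆ T → v i S ≤ v i T)
    (hzero : ∀ i, v i ∅ = 0)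
    (μ x : Fin n → NNReal)
    (hμ : ∀ i, IsGreatest {t : NNReal | ∃ P : Fin n → Finset M,
        IsPartitionOn Finset.univ P ∧ ∀ j, t ≤ v i (P j)} (μ i))
    (hx : ∀ i, IsLeast {y : NNReal | ∃ S : Finset M, y = v i S ∧
        ∃ A : Fin n → Finset M, IsPartitionOn Finset.univ A ∧
          A i = S ∧ ∀ j, j ≠ i → ∀ e ∈ A j, v i (A j \ {e}) ≤ v i S} (x i)) :
    (∀ i, x i ≤ μ i) ∧
      ∀ A : Fin n → Finset M, IsPartitionOn Finset.univ A →
        (∀ i, μ i ≤ v i (A i)) → ∀ i, x i ≤ v i (A i) :=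
  mxs_le_mms_general n hn v hmono μ x hμ hx
end

section
/- For a monotone valuation, removing one bundle whose value is strictly below RMMS(M, v, n) and reducing the number of agents by one cannot decrease the RMMS value: for every bundle B ⊆ M with v(B) < RMMS(M, v, n) and n ≥ 2, RMMS(M \ B, v, n−1) ≥ RMMS(M, v, n). -/
open Finset

/-- Removing one bundle of value strictly below `RMMS(M, v, n)` and reducing the number
of agents by one cannot decrease the RMMS value. -/
theorem rmms_residual_monotone {M : Type*} [Fintype M] [DecidableEq M]
    (n : ℕ) (hn : 2 ≤ n)
    (v : Finset M → NNReal)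
    (hmono : ∀ S T : Finset M, S ⊆ T → v S ≤ v T) (hzero : v ∅ = 0)
    (B : Finset M)
    (r r' : NNReal)
    (hr : IsGreatest {t : NNReal | RSF v n (Finset.univ : Finset M) t} r)
    (hB : v B < r)
    (hr' : IsGreatest {t : NNReal | RSF v (n - 1) ((Finset.univ : Finset M) \ B) t} r') :
    r ≤ r' := by
  refine hr'.2 ?_
  intro k hk C hCdisj hCsub hClt
  have hk1 : k + 1 < n := by omega
  set D : Fin (k + 1) → Finset M := Fin.cons B C with hD
  have hBC : ∀ a, Disjoint B (C a) := fun a => Finset.disjoint_sdiff.mono_right (hCsub a)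
  have hDdisj : ∀ i j, i ≠ j → Disjoint (D i) (D j) := by
    intro i j
    refine Fin.cases ?_ ?_ i <;> [skip; intro a] <;> refine Fin.cases ?_ ?_ j
    · exact fun h => absurd rfl h
    · intro b _
      simp only [hD, Fin.cons_zero, Fin.cons_succ]
      exact hBC b
    · intro _
      simp only [hD, Fin.cons_zero, Fin.cons_succ]
      exact (hBC a).symm
    · intro b hab
      simp only [hD, Fin.cons_succ]
      exact hCdisj a b (fun h => hab (by rw [h]))
  have hDsub : ∀ i, D i ⊆ Finset.univ := fun _ => Finset.subset_univ _
  have hDlt : ∀ i, v (D i) < r := by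
    intro i
    refine Fin.cases ?_ ?_ i
    · simpa [hD] using hB
    · intro a; simpa [hD] using hClt a
  obtain ⟨P, hPdisj, hPunion, hPval⟩ := hr.1 (k + 1) hk1 D hDdisj hDsub hDlt
  have hcast : n - (k + 1) = n - 1 - k := by omega
  refine ⟨fun i => P (Fin.cast hcast.symm i), ?_, ?_, fun i => hPval _⟩
  · intro i j hij
    exact hPdisj _ _ (fun h => hij (by simpa using Fin.cast_injective hcast.symm <| h))
  · have hDbi : Finset.univ.biUnion D = B ∪ Finset.univ.biUnion C := by
      ext x
      simp only [Finset.mem_biUnion, Finset.mem_univ, true_and, Finset.mem_union]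
      constructor
      · rintro ⟨i, hi⟩
        refine Fin.cases (fun h => Or.inl (by simpa [hD] using h))
          (fun a h => Or.inr ⟨a, by simpa [hD] using h⟩) i hi
      · rintro (h | ⟨a, ha⟩)
        · exact ⟨0, by simpa [hD] using h⟩
        · exact ⟨a.succ, by simpa [hD] using ha⟩
    have : Finset.univ.biUnion (fun i => P (Fin.cast hcast.symm i)) = Finset.univ.biUnion P := by
      ext x
      simp only [Finset.mem_biUnion, Finset.mem_univ, true_and]
      exact ⟨fun ⟨i, hi⟩ => ⟨_, hi⟩, fun ⟨i, hi⟩ => ⟨Fin.cast hcast i, by simpa using hi⟩⟩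
    rw [this, hPunion, hDbi]
    exact (sdiff_sdiff _ _ _).symm
end
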